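/- arXiv:2002.07851 — 6 statements merged into one kernel-verified Lean document; each statement's English description precedes it below -/
import Mathlib

section
/- Let v ∈ S_n and let (i,j) ∈ [n]² with j ≠ v(i). Then (i,j) belongs to the graph of the Bruhat interval [v, w₀] (i.e., there exists u with v ≤ u ≤ w₀ and u(i) = j) if and only if (i,j) is sandwiched by a non-inversion of v, meaning there exist k < l with v(k) < v(l), k ≤ i ≤ l, and either v(k) ≤ j ≤ v(l) or v(k) ≥ j ≥ v(l). -/
open Equiv Finset
open scoped Classical

/-- Bruhat order on the symmetric group on `Fin n`, via the rank-matrix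
characterization: `v ≤ w` iff every northeast corner count of `v` is at most
that of `w`. -/
def bruhatLE {n : ℕ} (v w : Equiv.Perm (Fin n)) : Prop :=
  ∀ i j : Fin n,
    (Finset.univ.filter fun k => k ≤ i ∧ j ≤ v k).card ≤
      (Finset.univ.filter fun k => k ≤ i ∧ j ≤ w k).card

/-- Coxeter length = number of inversions. -/
def len {n : ℕ} (v : Equiv.Perm (Fin n)) : ℕ :=
  (Finset.univ.filter fun p : Fin n × Fin n => p.1 < p.2 ∧ v p.2 < v p.1).card

/-- The graph of the Bruhat interval `[v, w]`. -/
def grInt {n : ℕ} (v w : Equiv.Perm (Fin n)) : Set (Fin n × Fin n) :=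
  {p | ∃ u : Equiv.Perm (Fin n), bruhatLE v u ∧ bruhatLE u w ∧ u p.1 = p.2}

/-! Every permutation lies below `w₀`, so only `v ≤ u` matters. If `v ≤ u` and
`u i < v i`, the rank condition at `(i, u i + 1)` forces some `k < i` with `v k ≤ u i`;
symmetrically, `v i < u i` and the rank condition at `(i - 1, u i)` force some `l > i`
with `u i ≤ v l`. Conversely, right multiplication by the transposition of a
non-inversion goes up in Bruhat order, and one or two such transpositions bring the
value `j` to position `i`. -/

section

variable {n : ℕ}

lemma card_filter_le_apply (w : Perm (Fin n)) (j : Fin n) :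
    #{k | j ≤ w k} = n - j := by
  rw [← Fin.card_Ici j]
  exact card_equiv w (by simp)

lemma bruhatLE.trans {u v w : Perm (Fin n)} (huv : bruhatLE u v) (hvw : bruhatLE v w) :
    bruhatLE u w :=
  fun i j => (huv i j).trans (hvw i j)

lemma bruhatLE_revPerm (u : Perm (Fin n)) : bruhatLE u Fin.revPerm := by
  intro i j
  have hrev : ({k | k ≤ i ∧ j ≤ Fin.revPerm k} : Finset (Fin n)) = Iic (min i j.rev) := by
    ext k
    simp [Fin.le_rev_iff]
  have hi : #{k | k ≤ i ∧ j ≤ u k} ≤ i + 1 :=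
    (card_le_card fun k hk => by simp_all).trans_eq (Fin.card_Iic i)
  have hj : #{k | k ≤ i ∧ j ≤ u k} ≤ n - j :=
    (card_le_card fun k hk => by simp_all).trans_eq (card_filter_le_apply u j)
  rw [hrev, Fin.card_Iic, Fin.coe_min, Fin.val_rev]
  omega

lemma bruhatLE_mul_swap (v : Perm (Fin n)) {a b : Fin n} (hab : a < b) (hv : v a < v b) :
    bruhatLE v (v * swap a b) := by
  intro i j
  refine card_le_card_of_injOn (fun m => if m = b ∧ v a < j then a else m) ?_ ?_
  · intro m hm
    simp only [coe_filter, mem_univ, true_and, Set.mem_ofPred_eq, Perm.mul_apply] at hm ⊢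
    split_ifs <;> grind
  · intro m₁ hm₁ m₂ hm₂ he
    simp only [coe_filter, mem_univ, true_and, Set.mem_ofPred_eq] at hm₁ hm₂ he
    grind

lemma bruhatLE.exists_gt_of_lt_apply {v u : Perm (Fin n)} (h : bruhatLE v u) {i : Fin n}
    (hlt : v i < u i) : ∃ l, i < l ∧ u i ≤ v l := by
  by_contra! hc
  have hleft : ∀ k, u i ≤ v k → k < i := fun k hk =>
    lt_of_not_ge fun hik => (hik.eq_or_lt.elim (fun e => e ▸ hlt) (hc k)).not_ge hk
  have hi : 0 < (i : ℕ) := by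
    have := hleft (v⁻¹ (u i)) (by simp)
    omega
  set i' : Fin n := ⟨i - 1, by omega⟩
  have hv : ({k | k ≤ i' ∧ u i ≤ v k} : Finset (Fin n)) =
      ({k | u i ≤ v k} : Finset (Fin n)) := by
    ext k
    simp only [mem_filter, mem_univ, true_and, and_iff_right_iff_imp]
    intro hk
    have := hleft k hk
    simp only [i', Fin.le_def]
    omega
  have hu : ({k | k ≤ i' ∧ u i ≤ u k} : Finset (Fin n)) ⊆
      ({k | u i ≤ u k} : Finset (Fin n)).erase i := by
    intro k hk
    simp only [mem_filter, mem_univ, true_and, mem_erase] at hk ⊢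
    refine ⟨fun e => ?_, hk.2⟩
    have := hk.1
    simp only [e, i', Fin.le_def] at this
    omega
  have key := h i' (u i)
  have hlt' := (card_le_card hu).trans_lt (card_erase_lt_of_mem (by simp))
  rw [hv, card_filter_le_apply] at key
  rw [card_filter_le_apply] at hlt'
  omega

lemma bruhatLE.exists_lt_of_apply_lt {v u : Perm (Fin n)} (h : bruhatLE v u) {i : Fin n}
    (hlt : u i < v i) : ∃ k, k < i ∧ v k ≤ u i := by
  by_contra! hc
  have hbelow : ∀ k ≤ i, u i < v k := fun k hk =>
    hk.eq_or_lt.elim (fun e => e ▸ hlt) (hc k)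
  set j : Fin n := ⟨u i + 1, by omega⟩
  have hv : ({k | k ≤ i ∧ j ≤ v k} : Finset (Fin n)) = Iic i := by
    ext k
    simp only [mem_filter, mem_univ, true_and, mem_Iic, and_iff_left_iff_imp]
    intro hk
    have := hbelow k hk
    simp only [j, Fin.le_def]
    omega
  have hu : ({k | k ≤ i ∧ j ≤ u k} : Finset (Fin n)) ⊆ (Iic i).erase i := by
    intro k hk
    simp only [mem_filter, mem_univ, true_and, mem_erase, mem_Iic] at hk ⊢
    refine ⟨fun e => ?_, hk.1⟩
    have := hk.2
    simp only [e, j, Fin.le_def] at this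
    omega
  have key := h i j
  have hlt' := (card_le_card hu).trans_lt (card_erase_lt_of_mem (by simp))
  rw [hv] at key
  omega

lemma grInt_subset_grInt {v u : Perm (Fin n)} (w : Perm (Fin n)) (h : bruhatLE v u) :
    grInt u w ⊆ grInt v w :=
  fun _ ⟨u', hu, hw, hp⟩ => ⟨u', h.trans hu, hw, hp⟩

lemma mem_grInt_revPerm_of_nonInversion {v : Perm (Fin n)} {a b : Fin n} (hab : a < b)
    (hv : v a < v b) :
    (a, v b) ∈ grInt v Fin.revPerm ∧ (b, v a) ∈ grInt v Fin.revPerm :=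
  ⟨⟨_, bruhatLE_mul_swap v hab hv, bruhatLE_revPerm _, by simp⟩,
    ⟨_, bruhatLE_mul_swap v hab hv, bruhatLE_revPerm _, by simp⟩⟩

lemma mem_grInt_revPerm_of_lt_apply {v : Perm (Fin n)} {i j k : Fin n} (hki : k < i)
    (hkj : v k ≤ j) (hji : j < v i) : (i, j) ∈ grInt v Fin.revPerm := by
  obtain ⟨p, rfl⟩ := v.surjective j
  rcases lt_or_gt_of_ne (show p ≠ i by rintro rfl; exact hji.false) with hpi | hip
  · exact (mem_grInt_revPerm_of_nonInversion hpi hji).2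
  · have hkp : v k < v p := hkj.lt_of_ne (v.injective.ne (hki.trans hip).ne)
    have hup : (v * swap k i) p = v p := by
      rw [Perm.mul_apply, swap_apply_of_ne_of_ne (hki.trans hip).ne' hip.ne']
    have := (mem_grInt_revPerm_of_nonInversion (v := v * swap k i) hip
      (by simpa [hup] using hkp)).1
    rw [hup] at this
    exact grInt_subset_grInt _ (bruhatLE_mul_swap v hki (hkj.trans_lt hji)) this

lemma mem_grInt_revPerm_of_apply_lt {v : Perm (Fin n)} {i j l : Fin n} (hil : i < l)
    (hjl : j ≤ v l) (hij : v i < j) : (i, j) ∈ grInt v Fin.revPerm := by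
  obtain ⟨p, rfl⟩ := v.surjective j
  rcases lt_or_gt_of_ne (show p ≠ i by rintro rfl; exact hij.false) with hpi | hip
  · have hpl : v p < v l := hjl.lt_of_ne (v.injective.ne (hpi.trans hil).ne)
    have hup : (v * swap i l) p = v p := by
      rw [Perm.mul_apply, swap_apply_of_ne_of_ne hpi.ne (hpi.trans hil).ne]
    have := (mem_grInt_revPerm_of_nonInversion (v := v * swap i l) hpi
      (by simpa [hup] using hpl)).2
    rw [hup] at this
    exact grInt_subset_grInt _ (bruhatLE_mul_swap v hil (hij.trans_le hjl)) this
  · exact (mem_grInt_revPerm_of_nonInversion hip hij).1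

end

/-- Characterization of the graph of the upper Bruhat interval `[v, w₀]`:
a point `(i, j)` with `j ≠ v i` lies in it iff it is sandwiched by a
non-inversion of `v`. -/
theorem mem_grInt_iff_sandwiched {n : ℕ} (v : Equiv.Perm (Fin n))
    (i j : Fin n) (hij : j ≠ v i) :
    (i, j) ∈ grInt v Fin.revPerm ↔
      ∃ k l : Fin n, k < l ∧ v k < v l ∧ k ≤ i ∧ i ≤ l ∧
        ((v k ≤ j ∧ j ≤ v l) ∨ (v l ≤ j ∧ j ≤ v k)) := by
  constructor
  · rintro ⟨u, hvu, -, rfl : u i = j⟩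
    rcases hij.lt_or_gt with hlt | hlt
    · obtain ⟨k, hki, hk⟩ := hvu.exists_lt_of_apply_lt hlt
      exact ⟨k, i, hki, hk.trans_lt hlt, hki.le, le_rfl, .inl ⟨hk, hlt.le⟩⟩
    · obtain ⟨l, hil, hl⟩ := hvu.exists_gt_of_lt_apply hlt
      exact ⟨i, l, hil, hlt.trans_le hl, le_rfl, hil.le, .inl ⟨hlt.le, hl⟩⟩
  · rintro ⟨k, l, -, hkl, hki, hil, hj⟩
    obtain ⟨hkj, hjl⟩ := hj.resolve_right fun h => (h.1.trans h.2).not_gt hkl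
    rcases hij.lt_or_gt with hlt | hlt
    · exact mem_grInt_revPerm_of_lt_apply (hki.lt_of_ne (by rintro rfl; exact hkj.not_gt hlt))
        hkj hlt
    · exact mem_grInt_revPerm_of_apply_lt (hil.lt_of_ne' (by rintro rfl; exact hjl.not_gt hlt))
        hjl hlt
end

section
/- A permutation w ∈ S_n avoids both 321 and 3412 if and only if every reduced expression for w contains each simple transposition s_a at most once. -/
/-!
Cut the positions between `i` and `i + 1` and let `crossings i w` count the positions `p ≤ i`
with `w p > i`; as many positions `p > i` have `w p ≤ i`. Left multiplication by `s_b` changes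
only the count at the cut `b`, by at most one, and turns a zero count there into `1`.
Hence `crossings i w` is at most the number of letters `s_i` in any word for `w`, with equality
for words without repeated letters.

Summing over the cuts gives `∑ p, (w p - p)` (truncated differences), which is at most
`len w = ∑ p, #{q > p | w q < w p}`, with equality exactly when no `p` is the middle entry of
a `321`. If `w` avoids `321`, two positions crossing the same cut produce a `3412`, and a `3412`
at `a < b < c < d` always puts two positions across the cut after `b`. Comparing both counts
along a reduced word gives the two directions.
-/

open Equiv Finset
open scoped Classical

def avoids321 {n : ℕ} (v : Equiv.Perm (Fin n)) : Prop :=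
  ¬ ∃ a b c : Fin n, a < b ∧ b < c ∧ v c < v b ∧ v b < v a

def avoids3412 {n : ℕ} (v : Equiv.Perm (Fin n)) : Prop :=
  ¬ ∃ a b c d : Fin n, a < b ∧ b < c ∧ c < d ∧ v c < v d ∧ v d < v a ∧ v a < v b

/-- `s` is a simple transposition (adjacent swap). -/
def IsSimple {n : ℕ} (s : Equiv.Perm (Fin n)) : Prop :=
  ∃ (i : Fin n) (h : (i : ℕ) + 1 < n), s = Equiv.swap i ⟨(i : ℕ) + 1, h⟩

theorem Finset.exists_lt_of_one_lt_card {α : Type*} [LinearOrder α] {s : Finset α}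
    (h : 1 < #s) : ∃ a ∈ s, ∃ b ∈ s, a < b :=
  ⟨_, min'_mem s _, _, max'_mem s _, min'_lt_max'_of_card s h⟩

theorem card_filter_perm_apply {α : Type*} [Fintype α] (v : Perm α) (P : α → Prop)
    [DecidablePred P] : #{p | P (v p)} = #{p | P p} :=
  card_equiv v (by simp)

section

variable {n : ℕ}

def IsSimpleAt (i : Fin n) (s : Perm (Fin n)) : Prop :=
  ∃ h : (i : ℕ) + 1 < n, s = swap i ⟨i + 1, h⟩

noncomputable def simpleCount (i : Fin n) (l : List (Perm (Fin n))) : ℕ :=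
  l.countP fun s => IsSimpleAt i s

theorem isSimpleAt_swap_iff {i b : Fin n} (hb : (b : ℕ) + 1 < n) :
    IsSimpleAt i (swap b ⟨b + 1, hb⟩) ↔ i = b := by
  refine ⟨fun ⟨hi, h⟩ => ?_, fun h => ⟨h ▸ hb, by subst h; rfl⟩⟩
  have hbi := congrArg (· b) h
  simp only [swap_apply_left, swap_apply_def, Fin.ext_iff] at hbi
  split_ifs at hbi <;> simp only [Fin.ext_iff] at * <;> omega

theorem simpleCount_cons_swap (i : Fin n) {b : Fin n} (hb : (b : ℕ) + 1 < n)
    (l : List (Perm (Fin n))) :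
    simpleCount i (swap b ⟨b + 1, hb⟩ :: l) = simpleCount i l + if i = b then 1 else 0 := by
  simp [simpleCount, List.countP_cons, isSimpleAt_swap_iff]

theorem sum_simpleCount {l : List (Perm (Fin n))} (hl : ∀ s ∈ l, IsSimple s) :
    ∑ i, simpleCount i l = l.length := by
  induction l with
  | nil => simp [simpleCount]
  | cons s l ih =>
    obtain ⟨⟨b, hb, rfl⟩, hrest⟩ := List.forall_mem_cons.1 hl
    simp [simpleCount_cons_swap, sum_add_distrib, ih hrest]

theorem simpleCount_eq_count {l : List (Perm (Fin n))} (hl : ∀ s ∈ l, IsSimple s) {b : Fin n}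
    (hb : (b : ℕ) + 1 < n) : simpleCount b l = l.count (swap b ⟨b + 1, hb⟩) := by
  rw [simpleCount, List.count_eq_countP]
  refine List.countP_congr fun s hs => ?_
  obtain ⟨c, hc, rfl⟩ := hl s hs
  simp only [decide_eq_true_eq, beq_iff_eq, isSimpleAt_swap_iff]
  refine ⟨fun h => by subst h; rfl, fun h => ?_⟩
  have hc' : IsSimpleAt c (swap c ⟨c + 1, hc⟩) := ⟨hc, rfl⟩
  exact ((isSimpleAt_swap_iff hb).1 (h ▸ hc')).symm

theorem nodup_iff_simpleCount_le_one {l : List (Perm (Fin n))} (hl : ∀ s ∈ l, IsSimple s) :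
    l.Nodup ↔ ∀ i, simpleCount i l ≤ 1 := by
  rw [List.nodup_iff_count_le_one]
  refine ⟨fun h i => ?_, fun h s => ?_⟩
  · by_cases hi : (i : ℕ) + 1 < n
    · exact simpleCount_eq_count hl hi ▸ h _
    · simp [simpleCount, IsSimpleAt, hi]
  · by_cases hs : s ∈ l
    · obtain ⟨b, hb, rfl⟩ := hl s hs
      exact simpleCount_eq_count hl hb ▸ h b
    · simp [List.count_eq_zero.2 hs]

def crossings (i : Fin n) (v : Perm (Fin n)) : ℕ :=
  #{p | p ≤ i ∧ i < v p}

theorem crossings_eq_card (i : Fin n) (v : Perm (Fin n)) :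
    crossings i v = #{p | i < p ∧ v p ≤ i} := by
  have hdiff₁ : crossings i v = #(univ.filter (· ≤ i) \ univ.filter (v · ≤ i)) := by
    rw [crossings]; congr 1; ext; simp
  have hdiff₂ :
      #{p | i < p ∧ v p ≤ i} = #(univ.filter (v · ≤ i) \ univ.filter (· ≤ i)) := by
    congr 1; ext; simp [and_comm]
  rw [hdiff₁, hdiff₂]
  exact card_sdiff_comm (card_filter_perm_apply v (· ≤ i)).symm

theorem crossings_one (i : Fin n) : crossings i 1 = 0 := by
  rw [crossings, card_eq_zero, filter_eq_empty_iff]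
  exact fun p _ h => not_lt_of_ge h.1 h.2

theorem crossings_swap_mul_of_ne {i b : Fin n} (hb : (b : ℕ) + 1 < n) (hi : i ≠ b)
    (v : Perm (Fin n)) : crossings i (swap b ⟨b + 1, hb⟩ * v) = crossings i v := by
  have hlt : ∀ x : Fin n, i < swap b ⟨b + 1, hb⟩ x ↔ i < x := by
    intro x
    rw [swap_apply_def]
    split_ifs <;> simp only [Fin.lt_def, Fin.ext_iff] at * <;> omega
  simp only [crossings, Perm.mul_apply, hlt]

theorem crossings_swap_mul_le {b : Fin n} (hb : (b : ℕ) + 1 < n) (v : Perm (Fin n)) :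
    crossings b (swap b ⟨b + 1, hb⟩ * v) ≤ crossings b v + 1 := by
  refine (card_le_card fun p hp => ?_).trans (card_insert_le (v.symm b) _)
  rw [mem_filter] at hp
  simp only [mem_filter, mem_univ, true_and, mem_insert, Perm.mul_apply, eq_symm_apply,
    swap_apply_def] at hp ⊢
  split_ifs at hp <;> simp only [Fin.lt_def, Fin.le_def, Fin.ext_iff] at * <;> omega

theorem crossings_swap_mul_eq_one {b : Fin n} (hb : (b : ℕ) + 1 < n) {v : Perm (Fin n)}
    (hv : crossings b v = 0) : crossings b (swap b ⟨b + 1, hb⟩ * v) = 1 := by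
  have hup := hv
  have hdown := crossings_eq_card b v ▸ hv
  simp only [crossings, card_eq_zero, filter_eq_empty_iff, mem_univ, true_implies,
    not_and, not_lt] at hup hdown
  rw [crossings, card_eq_one]
  refine ⟨v.symm b, ?_⟩
  ext p
  rw [mem_filter]
  simp only [mem_univ, true_and, mem_singleton, eq_symm_apply, Perm.mul_apply, swap_apply_def]
  have := @hup p
  have := @hdown p
  split_ifs <;> simp only [Fin.lt_def, Fin.le_def, Fin.ext_iff] at * <;> omega

theorem crossings_prod_le {l : List (Perm (Fin n))} (hl : ∀ s ∈ l, IsSimple s) (i : Fin n) :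
    crossings i l.prod ≤ simpleCount i l := by
  induction l with
  | nil => simp [crossings_one, simpleCount]
  | cons s l ih =>
    obtain ⟨⟨b, hb, rfl⟩, hrest⟩ := List.forall_mem_cons.1 hl
    have ih := ih hrest
    rw [List.prod_cons, simpleCount_cons_swap]
    split_ifs with hi
    · subst hi
      have := crossings_swap_mul_le hb l.prod
      omega
    · rw [crossings_swap_mul_of_ne hb hi]
      omega

theorem crossings_prod_of_nodup {l : List (Perm (Fin n))} (hl : ∀ s ∈ l, IsSimple s)
    (hnd : l.Nodup) (i : Fin n) : crossings i l.prod = simpleCount i l := by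
  induction l with
  | nil => simp [crossings_one, simpleCount]
  | cons s l ih =>
    obtain ⟨⟨b, hb, rfl⟩, hrest⟩ := List.forall_mem_cons.1 hl
    obtain ⟨hnotMem, hrestNodup⟩ := List.nodup_cons.1 hnd
    rw [List.prod_cons, simpleCount_cons_swap]
    split_ifs with hi
    · subst hi
      have hzero : simpleCount i l = 0 := by
        rw [simpleCount_eq_count hrest hb, List.count_eq_zero]
        exact hnotMem
      rw [crossings_swap_mul_eq_one hb (by rw [ih hrest hrestNodup, hzero]), hzero]
    · rw [crossings_swap_mul_of_ne hb hi, ih hrest hrestNodup, add_zero]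

theorem sum_crossings (v : Perm (Fin n)) : ∑ i, crossings i v = ∑ p, ((v p : ℕ) - p) := by
  simp only [crossings, card_filter]
  rw [sum_comm]
  refine sum_congr rfl fun p _ => ?_
  rw [← card_filter, ← Fin.card_Ico]
  congr 1
  ext
  simp

def lehmer (v : Perm (Fin n)) (p : Fin n) : ℕ :=
  #{q | p < q ∧ v q < v p}

theorem len_eq_sum_lehmer (v : Perm (Fin n)) : len v = ∑ p, lehmer v p := by
  rw [len, card_filter, ← univ_product_univ, sum_product]
  simp only [lehmer, card_filter]

theorem card_smaller_before_add_lehmer (v : Perm (Fin n)) (p : Fin n) :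
    #{q | q < p ∧ v q < v p} + lehmer v p = v p := by
  have hsmaller : #{q | v q < v p} = v p := by
    rw [card_filter_perm_apply v (· < v p), ← Fin.card_Iio]
    congr 1
    ext
    simp
  rw [← hsmaller, lehmer, ← card_union_of_disjoint]
  · congr 1
    ext q
    simp only [mem_union, mem_filter, mem_univ, true_and]
    constructor
    · rintro (h | h) <;> exact h.2
    · intro h
      rcases lt_trichotomy q p with hqp | rfl | hpq
      · exact Or.inl ⟨hqp, h⟩
      · exact absurd h (lt_irrefl _)
      · exact Or.inr ⟨hpq, h⟩
  · exact disjoint_filter.2 fun _ _ h h' => lt_asymm h.1 h'.1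

theorem card_smaller_before_le (v : Perm (Fin n)) (p : Fin n) :
    #{q | q < p ∧ v q < v p} ≤ p := by
  calc #{q | q < p ∧ v q < v p} ≤ #{q | q < p} := card_le_card fun q hq => by simp_all
    _ = p := by rw [← Fin.card_Iio]; congr 1; ext; simp

theorem sub_le_lehmer (v : Perm (Fin n)) (p : Fin n) : (v p : ℕ) - p ≤ lehmer v p := by
  have := card_smaller_before_add_lehmer v p
  have := card_smaller_before_le v p
  omega

theorem lehmer_eq_sub_iff (v : Perm (Fin n)) (p : Fin n) :
    lehmer v p = (v p : ℕ) - p ↔ ¬∃ q r, q < p ∧ p < r ∧ v r < v p ∧ v p < v q := by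
  have hsum := card_smaller_before_add_lehmer v p
  have hle := card_smaller_before_le v p
  constructor
  · rintro h ⟨q, r, hqp, hpr, hrp, hpq⟩
    have hpos : 0 < lehmer v p := card_pos.2 ⟨r, by simp [hpr, hrp]⟩
    have hlt : #{q | q < p ∧ v q < v p} < p := by
      refine (card_lt_card ⟨fun q hq => ?_, fun h => ?_⟩).trans_eq (Fin.card_Iio p)
      · simp_all
      · have := h (mem_Iio.2 hqp)
        simp only [mem_filter, mem_univ, true_and] at this
        exact lt_asymm hpq this.2
    omega
  · intro h
    rcases Nat.eq_zero_or_pos (lehmer v p) with h0 | hpos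
    · omega
    obtain ⟨r, hr⟩ := card_pos.1 hpos
    simp only [mem_filter, mem_univ, true_and] at hr
    have hall : #{q | q < p ∧ v q < v p} = p := by
      rw [← Fin.card_Iio p]
      congr 1
      ext q
      simp only [mem_filter, mem_univ, true_and, mem_Iio, and_iff_left_iff_imp]
      intro hqp
      refine (lt_or_gt_of_ne fun he => hqp.ne (v.injective he)).resolve_right fun hpq => h ?_
      exact ⟨q, r, hqp, hr.1, hr.2, hpq⟩
    omega

theorem len_eq_sum_sub_iff_avoids321 (v : Perm (Fin n)) :
    len v = ∑ p, ((v p : ℕ) - p) ↔ avoids321 v := by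
  rw [len_eq_sum_lehmer, eq_comm, sum_eq_sum_iff_of_le fun p _ => sub_le_lehmer v p]
  simp only [mem_univ, true_implies, eq_comm (a := (v _ : ℕ) - _), lehmer_eq_sub_iff, avoids321]
  constructor
  · rintro h ⟨a, b, c, hab, hbc, hcb, hba⟩
    exact h b ⟨a, c, hab, hbc, hcb, hba⟩
  · rintro h b ⟨a, c, hab, hbc, hcb, hba⟩
    exact h ⟨a, b, c, hab, hbc, hcb, hba⟩

theorem crossings_le_one {v : Perm (Fin n)} (h321 : avoids321 v) (h3412 : avoids3412 v)
    (i : Fin n) : crossings i v ≤ 1 := by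
  by_contra! hup
  have hdown := crossings_eq_card i v ▸ hup
  obtain ⟨a, ha, b, hb, hab⟩ := exists_lt_of_one_lt_card hup
  obtain ⟨c, hc, d, hd, hcd⟩ := exists_lt_of_one_lt_card hdown
  simp only [mem_filter, mem_univ, true_and] at ha hb hc hd
  have hbc : b < c := hb.1.trans_lt hc.1
  have hcb : v c < v b := hc.2.trans_lt hb.2
  have hda : v d < v a := hd.2.trans_lt ha.2
  rcases lt_or_gt_of_ne (v.injective.ne hab.ne) with hvab | hvba
  · rcases lt_or_gt_of_ne (v.injective.ne hcd.ne) with hvcd | hvdc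
    · exact h3412 ⟨a, b, c, d, hab, hbc, hcd, hvcd, hda, hvab⟩
    · exact h321 ⟨b, c, d, hbc, hcd, hvdc, hcb⟩
  · exact h321 ⟨a, b, c, hab, hbc, hcb, hvba⟩

theorem avoids3412_of_crossings_le_one {v : Perm (Fin n)} (h : ∀ i, crossings i v ≤ 1) :
    avoids3412 v := by
  rintro ⟨a, b, c, d, hab, hbc, hcd, hvcd, hvda, hvab⟩
  rcases le_or_gt (v d) b with hdb | hdb
  · have : 1 < #{p | b < p ∧ v p ≤ b} :=
      one_lt_card.2 ⟨c, by simp [hbc, (hvcd.trans_le hdb).le],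
        d, by simp [hbc.trans hcd, hdb], hcd.ne⟩
    have := crossings_eq_card b v ▸ h b
    omega
  · have : 1 < crossings b v :=
      one_lt_card.2 ⟨a, by simp [hab.le, hdb.trans hvda],
        b, by simp [hdb.trans (hvda.trans hvab)], hab.ne⟩
    have := h b
    omega

theorem swap_succ_lt_swap_succ_iff {b : Fin n} (hb : (b : ℕ) + 1 < n) {x y : Fin n}
    (h₁ : ¬(x = b ∧ y = ⟨b + 1, hb⟩)) (h₂ : ¬(y = b ∧ x = ⟨b + 1, hb⟩)) :
    swap b ⟨b + 1, hb⟩ x < swap b ⟨b + 1, hb⟩ y ↔ x < y := by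
  simp only [swap_apply_def]
  split_ifs <;> simp only [Fin.lt_def, Fin.ext_iff, not_and] at * <;> omega

def inversions (v : Perm (Fin n)) : Finset (Fin n × Fin n) :=
  {p | p.1 < p.2 ∧ v p.2 < v p.1}

theorem len_eq_card_inversions (v : Perm (Fin n)) : len v = #(inversions v) :=
  rfl

theorem mem_inversions {v : Perm (Fin n)} {p : Fin n × Fin n} :
    p ∈ inversions v ↔ p.1 < p.2 ∧ v p.2 < v p.1 := by
  simp [inversions]

theorem len_one : len (1 : Perm (Fin n)) = 0 := by
  rw [len_eq_card_inversions, card_eq_zero, eq_empty_iff_forall_notMem]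
  exact fun _ h => lt_asymm (mem_inversions.1 h).1 (mem_inversions.1 h).2

theorem len_eq_len_swap_mul_add_one {b : Fin n} (hb : (b : ℕ) + 1 < n) {v : Perm (Fin n)}
    (h : v.symm ⟨b + 1, hb⟩ < v.symm b) : len v = len (swap b ⟨b + 1, hb⟩ * v) + 1 := by
  set b' : Fin n := ⟨b + 1, hb⟩
  have hbb' : b < b' := Fin.lt_def.2 (Nat.lt_succ_self b)
  have hinv : inversions v = insert (v.symm b', v.symm b) (inversions (swap b b' * v)) := by
    ext ⟨x, y⟩
    simp only [mem_inversions, mem_insert, Prod.mk.injEq, eq_symm_apply, Perm.mul_apply]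
    by_cases h₁ : v x = b' ∧ v y = b
    · have hxy : x < y := by rwa [← h₁.1, ← h₁.2, symm_apply_apply, symm_apply_apply] at h
      simp [h₁, hxy, hbb']
    by_cases h₂ : v x = b ∧ v y = b'
    · have hyx : y < x := by rwa [← h₂.1, ← h₂.2, symm_apply_apply, symm_apply_apply] at h
      simp [h₂, hyx.not_gt, hbb'.ne]
    · rw [swap_succ_lt_swap_succ_iff hb (fun h => h₁ h.symm) h₂]
      simp [h₁]
  have hnot : (v.symm b', v.symm b) ∉ inversions (swap b b' * v) := by
    simp [mem_inversions, hbb'.le]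
  rw [len_eq_card_inversions, len_eq_card_inversions, hinv, card_insert_of_notMem hnot]

theorem exists_left_descent {v : Perm (Fin n)} (hv : v ≠ 1) :
    ∃ (b : Fin n) (hb : (b : ℕ) + 1 < n), v.symm ⟨b + 1, hb⟩ < v.symm b := by
  by_contra! hasc
  apply hv
  cases n with
  | zero => exact Subsingleton.elim _ _
  | succ m =>
    have hmono : StrictMono v.symm := Fin.strictMono_iff_lt_succ.2 fun i =>
      (hasc i.castSucc (by simp)).lt_of_ne (v.symm.injective.ne (by simp [Fin.ext_iff]))
    ext x
    simpa using
      (Fin.coe_orderIso_apply (hmono.orderIsoOfSurjective v.symm v.symm.surjective) (v x)).symm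

theorem exists_reduced_word (w : Perm (Fin n)) :
    ∃ l : List (Perm (Fin n)), (∀ s ∈ l, IsSimple s) ∧ l.prod = w ∧ l.length = len w := by
  induction hk : len w using Nat.strong_induction_on generalizing w with
  | _ k ih =>
  by_cases hw : w = 1
  · subst hw
    exact ⟨[], by simp, rfl, by rw [← hk, len_one, List.length_nil]⟩
  obtain ⟨b, hb, hdesc⟩ := exists_left_descent hw
  have hlen := len_eq_len_swap_mul_add_one hb hdesc
  obtain ⟨l, hl, hprod, hlength⟩ := ih _ (by omega) (swap b ⟨b + 1, hb⟩ * w) rfl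
  refine ⟨swap b ⟨b + 1, hb⟩ :: l, fun s hs => ?_, ?_, ?_⟩
  · rcases List.mem_cons.1 hs with rfl | hs
    · exact ⟨b, hb, rfl⟩
    · exact hl s hs
  · rw [List.prod_cons, hprod, swap_mul_self_mul]
  · rw [List.length_cons, hlength]
    omega

end

/-- Tenner: `w` avoids 321 and 3412 iff every reduced expression for `w`
contains each simple transposition at most once. -/
theorem avoids321_and_3412_iff_boolean {n : ℕ} (w : Equiv.Perm (Fin n)) :
    (avoids321 w ∧ avoids3412 w) ↔
      ∀ l : List (Equiv.Perm (Fin n)), (∀ s ∈ l, IsSimple s) → l.prod = w →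
        l.length = len w → l.Nodup := by
  constructor
  · rintro ⟨h321, h3412⟩ l hl rfl hlen
    have hle : ∀ i ∈ univ, crossings i l.prod ≤ simpleCount i l :=
      fun i _ => crossings_prod_le hl i
    have hsum : ∑ i, crossings i l.prod = ∑ i, simpleCount i l := by
      rw [sum_crossings, ← (len_eq_sum_sub_iff_avoids321 _).2 h321, sum_simpleCount hl, hlen]
    rw [nodup_iff_simpleCount_le_one hl]
    intro i
    rw [← (sum_eq_sum_iff_of_le hle).1 hsum i (mem_univ i)]
    exact crossings_le_one h321 h3412 i
  · intro H
    obtain ⟨l, hl, rfl, hlen⟩ := exists_reduced_word w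
    have hnd := H l hl rfl hlen
    have hcross := crossings_prod_of_nodup hl hnd
    refine ⟨(len_eq_sum_sub_iff_avoids321 _).1 ?_, avoids3412_of_crossings_le_one fun i => ?_⟩
    · rw [← sum_crossings, ← hlen, ← sum_simpleCount hl]
      exact sum_congr rfl fun i _ => (hcross i).symm
    · exact hcross i ▸ (nodup_iff_simpleCount_le_one hl).1 hnd i
end

section
/- Let w ∈ S_n avoid the patterns 321 and 3412. If w(w(i)) = i for some i ∈ [n] (i.e., the transposition swapping i and w(i) agrees with w on those points), then |i − w(i)| ≤ 1. -/
open Equiv Finset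
open scoped Classical

private lemma key_aux {n : ℕ} (w : Equiv.Perm (Fin n))
    (h1 : avoids321 w) (h2 : avoids3412 w) (i : Fin n) (hi : w (w i) = i)
    (hij : (i : ℕ) + 2 ≤ ((w i : Fin n) : ℕ)) : False := by
  set j := w i with hj
  have hji : w j = i := hi
  have hijf : i < j := by rw [Fin.lt_def]; omega
  -- every middle position maps outside [i, j]
  have hmid : ∀ p : Fin n, i < p → p < j → w p < i ∨ j < w p := by
    intro p hip hpj
    by_contra hcon
    push_neg at hcon
    obtain ⟨hc1, hc2⟩ := hcon
    have hne1 : w p ≠ i := by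
      intro h
      exact absurd (w.injective (h.trans hji.symm)) (ne_of_lt hpj)
    have hne2 : w p ≠ j := by
      intro h
      exact absurd (w.injective (h.trans hj)) (ne_of_gt hip)
    have h3 : i < w p := lt_of_le_of_ne hc1 (Ne.symm hne1)
    have h4 : w p < j := lt_of_le_of_ne hc2 hne2
    exact h1 ⟨i, p, j, hip, hpj, by rw [hji]; exact h3, by rw [← hj]; exact h4⟩
  -- every middle value comes from outside [i, j]
  have hrmid : ∀ r : Fin n, i < w r → w r < j → r < i ∨ j < r := by
    intro r h3 h4
    by_contra hcon
    push_neg at hcon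
    obtain ⟨hc1, hc2⟩ := hcon
    have hne1 : r ≠ i := by
      intro h; subst h; exact absurd h4 (by simp [hj])
    have hne2 : r ≠ j := by
      intro h; subst h; exact absurd h3 (by simp [hji])
    have hir : i < r := lt_of_le_of_ne hc1 (Ne.symm hne1)
    have hrj : r < j := lt_of_le_of_ne hc2 hne2
    rcases hmid r hir hrj with h | h
    · exact absurd h3 (not_lt.mpr h.le)
    · exact absurd h4 (not_lt.mpr h.le)
  -- the middle position i+1
  have hin : (i : ℕ) + 1 < n := by have := j.isLt; omega
  set p₀ : Fin n := ⟨(i : ℕ) + 1, hin⟩ with hp₀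
  have hip₀ : i < p₀ := by rw [Fin.lt_def]; simp [hp₀]
  have hp₀j : p₀ < j := by rw [Fin.lt_def]; simp [hp₀]; omega
  by_cases hPm : ∃ p : Fin n, i < p ∧ p < j ∧ w p < i
  · obtain ⟨p, hip, hpj, hwp⟩ := hPm
    by_cases hRm : ∃ r : Fin n, r < i ∧ i < w r ∧ w r < j
    · -- 3412 pattern : r, i, p, j
      obtain ⟨r, hri, hiwr, hwrj⟩ := hRm
      exact h2 ⟨r, i, p, j, hri, hip, hpj,
        by rw [hji]; exact hwp, by rw [hji]; exact hiwr, by rw [← hj]; exact hwrj⟩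
    · -- find k < i with j < w k, get 321 pattern k, i, p
      have hC3 : ∃ k : Fin n, k < i ∧ j < w k := by
        by_contra hC
        push_neg at hC
        have hmaps : ∀ x ∈ insert p (Finset.Iio i), w x ∈ Finset.Iio i := by
          intro x hx
          rw [Finset.mem_insert] at hx
          rw [Finset.mem_Iio]
          rcases hx with rfl | hx
          · exact hwp
          · rw [Finset.mem_Iio] at hx
            have hwk := hC x hx
            have hne1 : w x ≠ i := fun h =>
              absurd (w.injective (h.trans hji.symm)) (ne_of_lt (hx.trans hijf))
            have hne2 : w x ≠ j := fun h =>
              absurd (w.injective (h.trans hj)) (ne_of_lt hx)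
            rcases lt_trichotomy (w x) i with h | h | h
            · exact h
            · exact absurd h hne1
            · exact absurd ⟨x, hx, h, lt_of_le_of_ne hwk hne2⟩ hRm
        have hcard := Finset.card_le_card_of_injOn w hmaps w.injective.injOn
        rw [Finset.card_insert_of_notMem (by simp [Finset.mem_Iio, not_lt, hip.le]),
          Fin.card_Iio] at hcard
        omega
      obtain ⟨k, hki, hjwk⟩ := hC3
      exact h1 ⟨k, i, p, hki, hip, by rw [← hj]; exact hwp.trans hijf, by rw [← hj]; exact hjwk⟩
  · -- all middle positions map above j; p₀ is one of them
    push_neg at hPm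
    have hwp₀ : j < w p₀ := by
      rcases hmid p₀ hip₀ hp₀j with h | h
      · exact absurd h (by simpa using hPm p₀ hip₀ hp₀j)
      · exact h
    by_cases hRp : ∃ r : Fin n, j < r ∧ i < w r ∧ w r < j
    · -- 3412 pattern : i, p₀, j, r
      obtain ⟨r, hjr, hiwr, hwrj⟩ := hRp
      exact h2 ⟨i, p₀, j, r, hip₀, hp₀j, hjr,
        by rw [hji]; exact hiwr, by rw [← hj]; exact hwrj, by rw [← hj]; exact hwp₀⟩
    · -- find r > j with w r < i, get 321 pattern p₀, j, r
      have hC4 : ∃ r : Fin n, j < r ∧ w r < i := by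
        by_contra hC
        push_neg at hC
        have hmaps : ∀ x ∈ insert p₀ (Finset.Ioi j), w x ∈ Finset.Ioi j := by
          intro x hx
          rw [Finset.mem_insert] at hx
          rw [Finset.mem_Ioi]
          rcases hx with rfl | hx
          · exact hwp₀
          · rw [Finset.mem_Ioi] at hx
            have hwk := hC x hx
            have hne1 : w x ≠ i := fun h =>
              absurd (w.injective (h.trans hji.symm)) (ne_of_gt hx)
            have hne2 : w x ≠ j := fun h =>
              absurd (w.injective (h.trans hj)) (ne_of_gt (hijf.trans hx))
            rcases lt_trichotomy (w x) j with h | h | h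
            · exact absurd ⟨x, hx, lt_of_le_of_ne hwk (Ne.symm hne1), h⟩ hRp
            · exact absurd h hne2
            · exact h
        have hcard := Finset.card_le_card_of_injOn w hmaps w.injective.injOn
        rw [Finset.card_insert_of_notMem (by simp [Finset.mem_Ioi, not_lt, hp₀j.le]),
          Fin.card_Ioi] at hcard
        omega
      obtain ⟨r, hjr, hwri⟩ := hC4
      exact h1 ⟨p₀, j, r, hp₀j, hjr, by rw [hji]; exact hwri, by rw [hji]; exact hijf.trans hwp₀⟩

/-- If `w` avoids 321 and 3412 and `w⁻¹(i) = w(i)`, then `|i - w(i)| ≤ 1`. -/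
theorem abs_sub_le_one_of_avoids {n : ℕ} (w : Equiv.Perm (Fin n))
    (h1 : avoids321 w) (h2 : avoids3412 w) (i : Fin n) (hi : w (w i) = i) :
    (((i : ℕ) : ℤ) - ((w i : ℕ) : ℤ)).natAbs ≤ 1 := by
  by_contra hc
  push_neg at hc
  have h2' : (i : ℕ) + 2 ≤ (w i : ℕ) ∨ (w i : ℕ) + 2 ≤ (i : ℕ) := by omega
  rcases h2' with h | h
  · exact key_aux w h1 h2 i hi h
  · have hi' : w (w (w i)) = w i := congrArg w hi
    have : ((w i : Fin n) : ℕ) + 2 ≤ ((w (w i) : Fin n) : ℕ) := by rw [hi]; exact h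
    exact key_aux w h1 h2 (w i) hi' this
end

section
/- (Dodgson condensation / Lewis Carroll's identity) For an n×n matrix M over a commutative ring and indices 1 ≤ a < a' ≤ n, 1 ≤ b < b' ≤ n: det(M) · det(M with rows a,a' and columns b,b' removed) = det(M with row a, column b removed) · det(M with row a', column b' removed) − det(M with row a, column b' removed) · det(M with row a', column b removed). -/
/-!
Let `D` be the identity matrix with rows `a, a'` replaced by the rows `b, b'` of `adj M`. Then
`D * M` is `M` with rows `a, a'` replaced by `det M • e_b, det M • e_b'`, so
`det D * det M = (det M)² * det (M with rows a, a' replaced by e_b, e_b')`. Here `det D` is the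
`2 × 2` minor of `adj M` on rows `b, b'`, columns `a, a'`, and cofactor expansion turns every
determinant in sight into a signed minor of `M`. Cancelling one factor `det M` is allowed for the
generic matrix over `ℤ[X_ij]`, and specialising its entries gives the identity over any
commutative ring.
-/

namespace Matrix

theorem submatrix_updateRow_of_injective {α m n m' n' : Type*} [DecidableEq m] [DecidableEq m']
    (M : Matrix m n α) {f : m' → m} (hf : f.Injective) (g : n' → n) (i : m') (u : n → α) :
    (M.updateRow (f i) u).submatrix f g = (M.submatrix f g).updateRow i (u ∘ g) := by
  ext k l
  simp [updateRow_apply, hf.eq_iff]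

variable {R : Type*} [CommRing R]

section Jacobi

variable {ι : Type*} [Fintype ι] [DecidableEq ι]

theorem det_one_updateRow_updateRow {i j : ι} (hij : i ≠ j) (u v : ι → R) :
    (((1 : Matrix ι ι R).updateRow i u).updateRow j v).det = u i * v j - u j * v i := by
  let U : Matrix ι (Fin 2) R := (of ![Pi.single i 1, Pi.single j 1])ᵀ
  let W : Matrix (Fin 2) ι R := of ![u - Pi.single i 1, v - Pi.single j 1]
  have hUW : ((1 : Matrix ι ι R).updateRow i u).updateRow j v = 1 + U * W := by
    ext k l
    rcases eq_or_ne k j with rfl | hkj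
    · simp [U, W, mul_apply, one_apply, Pi.single_apply, hij.symm, eq_comm]
    rcases eq_or_ne k i with rfl | hki
    · simp [U, W, mul_apply, one_apply, Pi.single_apply, hij, eq_comm]
    · simp [U, W, mul_apply, one_apply, Pi.single_apply, hki, hkj]
  rw [hUW, det_one_add_mul_comm, det_fin_two]
  simp [U, W, vecMul_transpose, hij, hij.symm]

theorem adjugate_vecMul (M : Matrix ι ι R) (k : ι) :
    M.adjugate k ᵥ* M = M.det • Pi.single k 1 := by
  rw [← mul_apply_eq_vecMul, adjugate_mul]
  ext l
  simp [one_eq_pi_single]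

theorem det_sq_mul_det_updateRow_single_updateRow_single (M : Matrix ι ι R) {i j : ι}
    (hij : i ≠ j) (k l : ι) :
    M.det ^ 2 * ((M.updateRow i (Pi.single k 1)).updateRow j (Pi.single l 1)).det =
      (M.adjugate k i * M.adjugate l j - M.adjugate k j * M.adjugate l i) * M.det := by
  have hmul : ((1 : Matrix ι ι R).updateRow i (M.adjugate k)).updateRow j (M.adjugate l) * M =
      (M.updateRow i (M.det • Pi.single k 1)).updateRow j (M.det • Pi.single l 1) := by
    rw [updateRow_mul, updateRow_mul, Matrix.one_mul, adjugate_vecMul, adjugate_vecMul]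
  rw [← det_one_updateRow_updateRow hij, ← det_mul, hmul, det_updateRow_smul,
    updateRow_comm M hij (M.det • _), det_updateRow_smul,
    updateRow_comm M hij.symm (Pi.single l 1)]
  ring

theorem det_mul_det_updateRow_single_updateRow_single (M : Matrix ι ι R) {i j : ι}
    (hij : i ≠ j) (k l : ι) :
    M.det * ((M.updateRow i (Pi.single k 1)).updateRow j (Pi.single l 1)).det =
      M.adjugate k i * M.adjugate l j - M.adjugate k j * M.adjugate l i := by
  let X := mvPolynomialX ι ι ℤ
  suffices X.det * ((X.updateRow i (Pi.single k 1)).updateRow j (Pi.single l 1)).det =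
      X.adjugate k i * X.adjugate l j - X.adjugate k j * X.adjugate l i by
    let φ := MvPolynomial.eval₂Hom (Int.castRingHom R) fun p : ι × ι => M p.1 p.2
    have hM : X.map φ = M := mvPolynomialX_map_eval₂ _ M
    have hadj (k i : ι) : φ (X.adjugate k i) = M.adjugate k i := by
      rw [← hM, ← RingHom.mapMatrix_apply, ← RingHom.map_adjugate]
      rfl
    have hsingle (k : ι) : φ ∘ Pi.single k 1 = Pi.single k 1 := by
      ext
      simp [Pi.single_apply, apply_ite φ]
    simpa only [map_mul, map_sub, RingHom.map_det, RingHom.mapMatrix_apply, map_updateRow, hM,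
      hadj, hsingle] using congrArg φ this
  apply mul_left_cancel₀ (det_mvPolynomialX_ne_zero ι ℤ)
  linear_combination det_sq_mul_det_updateRow_single_updateRow_single X hij k l

end Jacobi

theorem det_updateRow_single_eq_det_submatrix {n : ℕ} (M : Matrix (Fin (n + 1)) (Fin (n + 1)) R)
    (i j : Fin (n + 1)) :
    (M.updateRow i (Pi.single j 1)).det =
      (-1) ^ (i + j : ℕ) * (M.submatrix i.succAbove j.succAbove).det := by
  rw [← adjugate_apply, adjugate_fin_succ_eq_det_submatrix]

theorem det_updateRow_single_updateRow_single_eq_det_submatrix {n : ℕ}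
    (M : Matrix (Fin (n + 2)) (Fin (n + 2)) R) {a a' b b' : Fin (n + 2)} (ha : a < a')
    (hb : b < b') :
    ((M.updateRow a (Pi.single b 1)).updateRow a' (Pi.single b' 1)).det =
      (-1) ^ (a + b + (a' + b') : ℕ) *
        ((M.submatrix a'.succAbove b'.succAbove).submatrix
          (a.castPred (Fin.ne_last_of_lt ha)).succAbove
          (b.castPred (Fin.ne_last_of_lt hb)).succAbove).det := by
  have hrow : (M.updateRow a (Pi.single b 1)).submatrix a'.succAbove b'.succAbove =
      (M.submatrix a'.succAbove b'.succAbove).updateRow (a.castPred (Fin.ne_last_of_lt ha))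
        (Pi.single (b.castPred (Fin.ne_last_of_lt hb)) 1) := by
    conv_lhs => rw [← Fin.succAbove_castPred_of_lt _ _ ha, ← Fin.succAbove_castPred_of_lt _ _ hb]
    rw [submatrix_updateRow_of_injective _ Fin.succAbove_right_injective, Pi.single,
      Function.update_comp_eq_of_injective _ Fin.succAbove_right_injective]
    rfl
  rw [det_updateRow_single_eq_det_submatrix, hrow, det_updateRow_single_eq_det_submatrix]
  simp only [Fin.coe_castPred]
  ring

end Matrix

/-- Dodgson condensation / Lewis Carroll's identity. -/
theorem dodgson_condensation {R : Type*} [CommRing R] {n : ℕ}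
    (M : Matrix (Fin (n + 2)) (Fin (n + 2)) R)
    (a a' b b' : Fin (n + 2)) (ha : a < a') (hb : b < b') :
    M.det *
      ((M.submatrix a'.succAbove b'.succAbove).submatrix
        (⟨(a : ℕ), by omega⟩ : Fin (n + 1)).succAbove
        (⟨(b : ℕ), by omega⟩ : Fin (n + 1)).succAbove).det =
    (M.submatrix a.succAbove b.succAbove).det *
        (M.submatrix a'.succAbove b'.succAbove).det -
      (M.submatrix a.succAbove b'.succAbove).det *
        (M.submatrix a'.succAbove b.succAbove).det := by
  have h := M.det_mul_det_updateRow_single_updateRow_single ha.ne b b'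
  rw [M.det_updateRow_single_updateRow_single_eq_det_submatrix ha hb] at h
  simp only [Matrix.adjugate_fin_succ_eq_det_submatrix] at h
  have hsigned : (-1 : R) ^ (a + b + (a' + b') : ℕ) * (M.det *
        ((M.submatrix a'.succAbove b'.succAbove).submatrix
          (a.castPred (Fin.ne_last_of_lt ha)).succAbove
          (b.castPred (Fin.ne_last_of_lt hb)).succAbove).det) =
      (-1 : R) ^ (a + b + (a' + b') : ℕ) * ((M.submatrix a.succAbove b.succAbove).det *
        (M.submatrix a'.succAbove b'.succAbove).det - (M.submatrix a.succAbove b'.succAbove).det *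
        (M.submatrix a'.succAbove b.succAbove).det) := by
    -- each product of two signs in `h` equals `(-1) ^ (a + b + (a' + b'))`
    linear_combination h
  exact (isUnit_neg_one.pow _).mul_left_cancel hsigned
end

section
/- Let λ ⊆ (n,n,...,n) be a Young diagram (in English notation, viewed as a subset of [n]²) with Durfee square of size k, let μ be the complement n^n/λ, and let M be an n×n real matrix all of whose minors of size at most k are positive. Then (−1)^{|μ|} det(M|_λ) ≥ 0, with equality only if λ does not contain the staircase (n, n−1, ..., 1). -/
open Equiv Finset
open scoped Classical

/-- Restriction of a matrix to a subset of positions (entries outside are 0). -/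
noncomputable def restrict {n : ℕ} (M : Matrix (Fin n) (Fin n) ℝ)
    (Q : Set (Fin n × Fin n)) : Matrix (Fin n) (Fin n) ℝ :=
  fun i j => if (i, j) ∈ Q then M i j else 0

/-- A matrix is `k`-positive if all its minors of size at most `k` are positive. -/
def kPos {n : ℕ} (k : ℕ) (M : Matrix (Fin n) (Fin n) ℝ) : Prop :=
  ∀ m : ℕ, 1 ≤ m → m ≤ k → ∀ f g : Fin m → Fin n, StrictMono f → StrictMono g →
    0 < (M.submatrix f g).det

/-! If `λ` misses a box `(i, n - 1 - i)` of the staircase, the `n - i` bottom rows of `M|_λ` are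
supported on fewer than `n - i` columns, so the determinant vanishes.

Otherwise induct on `n`. If `λ = n^n`, then `k ≥ n`, so `det M > 0`. If not, apply the
Desnanot–Jacobi identity `det A · det A° = det A₁₁ · det Aₙₙ - det A₁ₙ · det Aₙ₁` to `A = M|_λ`,
where `A°` removes the first and last rows and columns and `Aᵢⱼ` removes row `i` and column `j`.
Every minor is again a submatrix of `M` restricted to a Young diagram inside `λ`, so its Durfee
square is at most `k`. All of these diagrams except possibly the one of `A₁₁` contain the staircase.
The complement sizes satisfy `|μ(A₁₁)| = |μ(A)|`, `|μ(Aₙₙ)| = |μ(A°)|` and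
`|μ(A₁ₙ)| + |μ(Aₙ₁)| + 1 = |μ(A)| + |μ(A°)|`, so after multiplying by the signs the identity
becomes `a · a° = a₁₁ aₙₙ + a₁ₙ aₙ₁` with `a₁₁ ≥ 0` and all other signed minors positive. -/

open Matrix

namespace Matrix

theorem det_submatrix_mul_det_submatrix {R m o : Type*} [CommRing R] [Fintype m] [DecidableEq m]
    [Fintype o] [DecidableEq o] (B C : Matrix m m R) (e f : o ≃ m) :
    (B.submatrix e f).det * (C.submatrix f e).det = B.det * C.det := by
  rw [← det_mul, ← det_mul, submatrix_mul_equiv, det_submatrix_equiv_self]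

theorem det_submatrix_comp_equiv {R κ m o : Type*} [CommRing R] [Fintype m] [DecidableEq m]
    [Fintype o] [DecidableEq o] (A : Matrix κ κ R) (f : m → κ) (e : o ≃ m) :
    (A.submatrix (f ∘ e) (f ∘ e)).det = (A.submatrix f f).det := by
  rw [← submatrix_submatrix, det_submatrix_equiv_self]

section DesnanotJacobi

variable {K : Type*} [Field K] {ι : Type*} [Fintype ι] [DecidableEq ι]

theorem det_submatrix_sumMap_const (A : Matrix (ι ⊕ Fin 2) (ι ⊕ Fin 2) K)
    [Invertible A.toBlocks₁₁] (a b : Fin 2) :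
    (A.submatrix (Sum.map id fun _ : Fin 1 => a) (Sum.map id fun _ : Fin 1 => b)).det =
      A.toBlocks₁₁.det * (A.toBlocks₂₂ - A.toBlocks₂₁ * ⅟A.toBlocks₁₁ * A.toBlocks₁₂) a b := by
  have hblocks : A.submatrix (Sum.map id fun _ : Fin 1 => a) (Sum.map id fun _ : Fin 1 => b) =
      fromBlocks A.toBlocks₁₁ (A.toBlocks₁₂.submatrix id fun _ => b)
        (A.toBlocks₂₁.submatrix (fun _ => a) id)
        (A.toBlocks₂₂.submatrix (fun _ => a) fun _ => b) := by
    ext (i | i) (j | j) <;> rfl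
  rw [hblocks, det_fromBlocks₁₁, det_fin_one]
  simp [mul_apply]

theorem det_mul_det_toBlocks₁₁ (A : Matrix (ι ⊕ Fin 2) (ι ⊕ Fin 2) K)
    (hA : A.toBlocks₁₁.det ≠ 0) :
    A.det * A.toBlocks₁₁.det =
      (A.submatrix (Sum.map id fun _ : Fin 1 => 0) (Sum.map id fun _ : Fin 1 => 0)).det *
        (A.submatrix (Sum.map id fun _ : Fin 1 => 1) (Sum.map id fun _ : Fin 1 => 1)).det -
      (A.submatrix (Sum.map id fun _ : Fin 1 => 0) (Sum.map id fun _ : Fin 1 => 1)).det *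
        (A.submatrix (Sum.map id fun _ : Fin 1 => 1) (Sum.map id fun _ : Fin 1 => 0)).det := by
  let := invertibleOfIsUnitDet _ (isUnit_iff_ne_zero.2 hA)
  have hSchur : A.det = A.toBlocks₁₁.det *
      (A.toBlocks₂₂ - A.toBlocks₂₁ * ⅟A.toBlocks₁₁ * A.toBlocks₁₂).det := by
    conv_lhs => rw [← fromBlocks_toBlocks A]
    exact det_fromBlocks₁₁ ..
  rw [hSchur, det_fin_two]
  simp only [det_submatrix_sumMap_const]
  ring

end DesnanotJacobi

theorem desnanot_jacobi {K : Type*} [Field K] {n : ℕ} (A : Matrix (Fin (n + 2)) (Fin (n + 2)) K)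
    (hA : (A.submatrix (Fin.castSucc ∘ Fin.succ) (Fin.castSucc ∘ Fin.succ)).det ≠ 0) :
    A.det * (A.submatrix (Fin.castSucc ∘ Fin.succ) (Fin.castSucc ∘ Fin.succ)).det =
      (A.submatrix Fin.succ Fin.succ).det * (A.submatrix Fin.castSucc Fin.castSucc).det -
        (A.submatrix Fin.succ Fin.castSucc).det * (A.submatrix Fin.castSucc Fin.succ).det := by
  let e : Fin n ⊕ Fin 2 ≃ Fin (n + 2) :=
    finSumFinEquiv.trans (Fin.cycleRange (Fin.last n).castSucc)
  let eL : Fin n ⊕ Fin 1 ≃ Fin (n + 1) := finSumFinEquiv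
  let eF : Fin n ⊕ Fin 1 ≃ Fin (n + 1) := finSumFinEquiv.trans (Fin.cycleRange (Fin.last n))
  -- Each equivalence lists the inner indices first, then the border: `0` and `last` for `e`,
  -- the last index for `eL` and `0` for `eF`.
  have he : e ∘ Sum.inl = Fin.castSucc ∘ Fin.succ := by
    funext i
    ext
    simp [e, Fin.cycleRange_apply, Fin.lt_def, Fin.val_add_one, Fin.ext_iff]
    omega
  have he₀ : e ∘ Sum.map id (fun _ : Fin 1 => 0) = Fin.castSucc ∘ eF := by
    funext x
    rcases x with i | i <;> ext <;>
      simp [e, eF, Fin.cycleRange_apply, Fin.lt_def, Fin.val_add_one, Fin.ext_iff]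
    split_ifs <;> omega
  have he₁ : e ∘ Sum.map id (fun _ : Fin 1 => 1) = Fin.succ ∘ eL := by
    funext x
    rcases x with i | i <;> ext <;>
      simp [e, eL, Fin.cycleRange_apply, Fin.lt_def, Fin.val_add_one, Fin.ext_iff]
    omega
  have hblock : (A.submatrix e e).toBlocks₁₁ =
      A.submatrix (Fin.castSucc ∘ Fin.succ) (Fin.castSucc ∘ Fin.succ) := by
    rw [← he]
    rfl
  have key := det_mul_det_toBlocks₁₁ (A.submatrix e e) (hblock ▸ hA)
  simp only [hblock, det_submatrix_equiv_self, submatrix_submatrix, he₀, he₁,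
    det_submatrix_comp_equiv] at key
  rw [key, ← det_submatrix_mul_det_submatrix (A.submatrix Fin.succ Fin.castSucc)
    (A.submatrix Fin.castSucc Fin.succ) eL eF, submatrix_submatrix, submatrix_submatrix]
  ring

end Matrix

section YoungDiagram

variable {n m : ℕ}

def youngShape (lam : Fin n → ℕ) : Set (Fin n × Fin n) := {p | (p.2 : ℕ) < lam p.1}

/-- The size `|μ|` of the complement `μ = n^n / λ`, counted row by row. -/
def coSize (lam : Fin n → ℕ) : ℕ := ∑ i, (n - lam i)

noncomputable def signedDet (M : Matrix (Fin n) (Fin n) ℝ) (lam : Fin n → ℕ) : ℝ :=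
  (-1) ^ coSize lam * (restrict M (youngShape lam)).det

def ContainsStaircase (lam : Fin n → ℕ) : Prop := ∀ i : Fin n, n - (i : ℕ) ≤ lam i

/-- The sizes of the squares contained in `λ`; the Durfee square is the largest. -/
def durfeeSet (lam : Fin n → ℕ) : Set ℕ := {d | d ≤ n ∧ ∀ i : Fin n, (i : ℕ) < d → d ≤ lam i}

/-- The diagram that `λ` cuts out of the rows `f` and the columns `s, …, s + m - 1`. -/
def subShape (lam : Fin n → ℕ) (f : Fin m → Fin n) (s : ℕ) : Fin m → ℕ :=
  fun i => min (lam (f i)) (m + s) - s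

theorem coSize_eq_mul_sub_sum {lam : Fin n → ℕ} (hle : ∀ i, lam i ≤ n) :
    coSize lam = n * n - ∑ i, lam i := by
  rw [coSize, sum_tsub_distrib _ fun i _ => hle i]
  simp

@[simp]
theorem restrict_youngShape_apply (M : Matrix (Fin n) (Fin n) ℝ) (lam : Fin n → ℕ) (i j : Fin n) :
    restrict M (youngShape lam) i j = if (j : ℕ) < lam i then M i j else 0 :=
  if_congr Iff.rfl rfl rfl

theorem restrict_submatrix_subShape (M : Matrix (Fin n) (Fin n) ℝ) (lam : Fin n → ℕ)
    (f g : Fin m → Fin n) (s : ℕ) (hg : ∀ j, (g j : ℕ) = j + s) :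
    (restrict M (youngShape lam)).submatrix f g =
      restrict (M.submatrix f g) (youngShape (subShape lam f s)) := by
  ext i j
  have hj := j.isLt
  have hmem : (j : ℕ) + s < lam (f i) ↔ (j : ℕ) < min (lam (f i)) (m + s) - s := by omega
  simp only [submatrix_apply, restrict_youngShape_apply, subShape, hg]
  exact if_congr hmem rfl rfl

theorem det_restrict_youngShape_eq_zero (M : Matrix (Fin n) (Fin n) ℝ) {lam : Fin n → ℕ}
    (hanti : Antitone lam) {i₀ : Fin n} (hi₀ : lam i₀ < n - i₀) :
    (restrict M (youngShape lam)).det = 0 := by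
  refine (det_apply _).trans (sum_eq_zero fun σ _ => ?_)
  obtain ⟨i, hi⟩ : ∃ i : Fin n, lam (σ i) ≤ i := by
    by_contra! hall
    have hcard := card_le_card_of_injOn σ.symm (s := Ici i₀)
      (t := Iio ⟨lam i₀, by omega⟩) (fun r hr => by
        have := hall (σ.symm r)
        rw [apply_symm_apply] at this
        simp only [coe_Iio, Set.mem_Iio, Fin.lt_def]
        exact this.trans_le (hanti (mem_Ici.1 hr)))
      σ.symm.injective.injOn
    simp only [Fin.card_Ici, Fin.card_Iio] at hcard
    omega
  refine smul_eq_zero_of_right _ (prod_eq_zero (mem_univ i) ?_)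
  simp [hi]

theorem signedDet_nonneg {M : Matrix (Fin n) (Fin n) ℝ} {lam : Fin n → ℕ}
    (hanti : Antitone lam) (hpos : ContainsStaircase lam → 0 < signedDet M lam) :
    0 ≤ signedDet M lam := by
  by_cases hstair : ContainsStaircase lam
  · exact (hpos hstair).le
  · obtain ⟨i₀, hi₀⟩ := not_forall.1 hstair
    rw [signedDet, det_restrict_youngShape_eq_zero M hanti (not_le.1 hi₀), mul_zero]

theorem signedDet_of_forall_le {M : Matrix (Fin n) (Fin n) ℝ} {lam : Fin n → ℕ}
    (h : ∀ i, n ≤ lam i) : signedDet M lam = M.det := by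
  have hM : restrict M (youngShape lam) = M := by
    ext i j
    simp [j.isLt.trans_le (h i)]
  simp [signedDet, coSize, hM, Nat.sub_eq_zero_of_le (h _)]

theorem kPos.submatrix {k : ℕ} {M : Matrix (Fin n) (Fin n) ℝ} (hM : kPos k M)
    {f g : Fin m → Fin n} (hf : StrictMono f) (hg : StrictMono g) :
    kPos k (M.submatrix f g) := fun p hp hpk _ _ hf' hg' =>
  hM p hp hpk _ _ (hf.comp hf') (hg.comp hg')

theorem kPos.det_pos {k : ℕ} {M : Matrix (Fin n) (Fin n) ℝ} (hM : kPos k M) (hn : n ≤ k) :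
    0 < M.det := by
  rcases Nat.eq_zero_or_pos n with rfl | hn0
  · simp
  · simpa using hM n hn0 hn id id strictMono_id strictMono_id

section subShape

variable {lam : Fin n → ℕ} {f : Fin m → Fin n} {s : ℕ}

theorem Antitone.subShape (hanti : Antitone lam) (hf : Monotone f) (s : ℕ) :
    Antitone (subShape lam f s) := fun _ _ hij =>
  Nat.sub_le_sub_right (min_le_min_right _ (hanti (hf hij))) s

theorem ContainsStaircase.subShape (hstair : ContainsStaircase lam)
    (hf : ∀ i : Fin m, (f i : ℕ) + m + s ≤ n + i) : ContainsStaircase (subShape lam f s) := by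
  intro i
  have := hstair (f i)
  have := hf i
  simp only [_root_.subShape]
  omega

theorem durfeeSet_subShape_subset (hanti : Antitone lam) (hf : ∀ i : Fin m, (i : ℕ) ≤ f i) :
    durfeeSet (subShape lam f s) ⊆ durfeeSet lam := by
  rintro d ⟨hdm, hd⟩
  refine ⟨?_, fun i hi => ?_⟩
  · rcases Nat.eq_zero_or_pos d with rfl | hd0
    · exact Nat.zero_le _
    · set i' : Fin m := ⟨d - 1, by omega⟩
      have := hf i'
      have := (f i').isLt
      simp only [i'] at *
      omega
  · let i' : Fin m := ⟨i, by omega⟩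
    calc d ≤ subShape lam f s i' := hd i' hi
      _ ≤ lam (f i') := (Nat.sub_le _ _).trans (min_le_left _ _)
      _ ≤ lam i := hanti (hf i')

end subShape

section Condensation

variable {N : ℕ} {lam : Fin (N + 2) → ℕ}

theorem coSize_subShape_succ_one (hstair : ContainsStaircase lam) :
    coSize (subShape lam Fin.succ 1) = coSize lam := by
  have h0 : N + 2 ≤ lam 0 := by simpa using hstair 0
  rw [coSize, coSize, Fin.sum_univ_succ (fun i => N + 2 - lam i), Nat.sub_eq_zero_of_le h0,
    zero_add]
  refine sum_congr rfl fun i _ => ?_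
  have := hstair i.succ
  simp only [subShape, Fin.val_succ] at *
  omega

theorem coSize_subShape_castSucc_zero (hstair : ContainsStaircase lam) :
    coSize (subShape lam Fin.castSucc 0) = coSize (subShape lam (Fin.castSucc ∘ Fin.succ) 1) := by
  have h0 : N + 1 - subShape lam Fin.castSucc 0 0 = 0 := by
    have : N + 2 ≤ lam 0 := by simpa using hstair 0
    simp only [subShape, Fin.castSucc_zero]
    omega
  rw [coSize, coSize, Fin.sum_univ_succ, h0, zero_add]
  refine sum_congr rfl fun i _ => ?_
  have := hstair i.succ.castSucc
  simp only [subShape, Fin.val_castSucc, Fin.val_succ, Function.comp_apply] at *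
  omega

theorem coSize_subShape_succ_zero_add_castSucc_one (hstair : ContainsStaircase lam)
    (hlast : lam (Fin.last (N + 1)) ≤ N + 1) :
    coSize (subShape lam Fin.succ 0) + coSize (subShape lam Fin.castSucc 1) + 1 =
      coSize lam + coSize (subShape lam (Fin.castSucc ∘ Fin.succ) 1) := by
  have hZ : coSize (subShape lam Fin.succ 0) =
      coSize (subShape lam (Fin.castSucc ∘ Fin.succ) 1) + (N + 1 - lam (Fin.last (N + 1))) := by
    rw [coSize, coSize, Fin.sum_univ_castSucc]
    simp only [subShape, Fin.succ_last, Function.comp_apply, Fin.succ_castSucc,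
      Nat.succ_eq_add_one]
    congr 1
    · refine sum_congr rfl fun i _ => ?_
      have := hstair i.succ.castSucc
      simp only [Fin.val_castSucc, Fin.val_succ] at this
      omega
    · omega
  have hW : coSize (subShape lam Fin.castSucc 1) + (N + 2 - lam (Fin.last (N + 1))) =
      coSize lam := by
    rw [coSize, coSize, Fin.sum_univ_castSucc (fun i => N + 2 - lam i)]
    congr 1
    refine sum_congr rfl fun i _ => ?_
    have := hstair i.castSucc
    simp only [subShape, Fin.val_castSucc] at *
    omega
  omega

theorem signedDet_condensation (M : Matrix (Fin (N + 2)) (Fin (N + 2)) ℝ)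
    (hstair : ContainsStaircase lam) (hlast : lam (Fin.last (N + 1)) ≤ N + 1)
    (hC : signedDet (M.submatrix (Fin.castSucc ∘ Fin.succ) (Fin.castSucc ∘ Fin.succ))
      (subShape lam (Fin.castSucc ∘ Fin.succ) 1) ≠ 0) :
    signedDet M lam * signedDet (M.submatrix (Fin.castSucc ∘ Fin.succ) (Fin.castSucc ∘ Fin.succ))
        (subShape lam (Fin.castSucc ∘ Fin.succ) 1) =
      signedDet (M.submatrix Fin.succ Fin.succ) (subShape lam Fin.succ 1) *
          signedDet (M.submatrix Fin.castSucc Fin.castSucc) (subShape lam Fin.castSucc 0) +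
        signedDet (M.submatrix Fin.succ Fin.castSucc) (subShape lam Fin.succ 0) *
          signedDet (M.submatrix Fin.castSucc Fin.succ) (subShape lam Fin.castSucc 1) := by
  have hinner := restrict_submatrix_subShape M lam (Fin.castSucc ∘ Fin.succ)
    (Fin.castSucc ∘ Fin.succ) 1 fun _ => rfl
  have hdet := desnanot_jacobi (restrict M (youngShape lam))
    (hinner ▸ right_ne_zero_of_mul hC)
  rw [hinner, restrict_submatrix_subShape M lam Fin.succ Fin.succ 1 fun _ => rfl,
    restrict_submatrix_subShape M lam Fin.castSucc Fin.castSucc 0 fun _ => rfl,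
    restrict_submatrix_subShape M lam Fin.succ Fin.castSucc 0 fun _ => rfl,
    restrict_submatrix_subShape M lam Fin.castSucc Fin.succ 1 fun _ => rfl] at hdet
  have hsign : (-1 : ℝ) ^ coSize (subShape lam Fin.succ 0) *
      (-1) ^ coSize (subShape lam Fin.castSucc 1) =
      -((-1) ^ coSize lam * (-1) ^ coSize (subShape lam (Fin.castSucc ∘ Fin.succ) 1)) := by
    rw [← pow_add, ← pow_add, ← coSize_subShape_succ_zero_add_castSucc_one hstair hlast,
      pow_succ, mul_neg_one, neg_neg]
  simp only [signedDet, coSize_subShape_succ_one hstair, coSize_subShape_castSucc_zero hstair]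
  rw [mul_mul_mul_comm ((-1 : ℝ) ^ coSize (subShape lam Fin.succ 0)), hsign]
  linear_combination
    (-1 : ℝ) ^ coSize lam * (-1) ^ coSize (subShape lam (Fin.castSucc ∘ Fin.succ) 1) * hdet

end Condensation

theorem signedDet_pos {k : ℕ} {lam : Fin n → ℕ} {M : Matrix (Fin n) (Fin n) ℝ}
    (hanti : Antitone lam) (hstair : ContainsStaircase lam)
    (hk : k ∈ upperBounds (durfeeSet lam)) (hM : kPos k M) : 0 < signedDet M lam := by
  induction n using Nat.strong_induction_on with
  | _ n ih =>
  by_cases hfull : ∀ i, n ≤ lam i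
  · rw [signedDet_of_forall_le hfull]
    exact hM.det_pos (hk ⟨le_rfl, fun i _ => hfull i⟩)
  obtain ⟨i₀, hi₀⟩ := not_forall.1 hfull
  obtain ⟨N, rfl⟩ : ∃ N, n = N + 2 := ⟨n - 2, by have := hstair i₀; omega⟩
  have hlast : lam (Fin.last (N + 1)) ≤ N + 1 := (hanti (Fin.le_last i₀)).trans (by omega)
  have ih' : ∀ {m} (_ : m < N + 2) {f g : Fin m → Fin (N + 2)} (s : ℕ), StrictMono f →
      StrictMono g → (∀ i : Fin m, (i : ℕ) ≤ f i) → ContainsStaircase (subShape lam f s) →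
      0 < signedDet (M.submatrix f g) (subShape lam f s) :=
    fun hm _ _ s hf hg hfi hst => ih _ hm (hanti.subShape hf.monotone s) hst
      (upperBounds_mono_set (durfeeSet_subShape_subset hanti hfi) hk) (hM.submatrix hf hg)
  have hC := ih' (f := Fin.castSucc ∘ Fin.succ) (g := Fin.castSucc ∘ Fin.succ) (by omega) 1
    (Fin.strictMono_castSucc.comp Fin.strictMono_succ)
    (Fin.strictMono_castSucc.comp Fin.strictMono_succ) (fun i => by simp)
    (hstair.subShape fun i => by simp; omega)
  have hY := ih' (f := Fin.castSucc) (g := Fin.castSucc) (by omega) 0 Fin.strictMono_castSucc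
    Fin.strictMono_castSucc (fun i => by simp) (hstair.subShape fun i => by simp; omega)
  have hZ := ih' (f := Fin.succ) (g := Fin.castSucc) (by omega) 0 Fin.strictMono_succ
    Fin.strictMono_castSucc (fun i => by simp) (hstair.subShape fun i => by simp; omega)
  have hW := ih' (f := Fin.castSucc) (g := Fin.succ) (by omega) 1 Fin.strictMono_castSucc
    Fin.strictMono_succ (fun i => by simp) (hstair.subShape fun i => by simp; omega)
  have hX : 0 ≤ signedDet (M.submatrix Fin.succ Fin.succ) (subShape lam Fin.succ 1) :=
    signedDet_nonneg (hanti.subShape Fin.strictMono_succ.monotone 1)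
      (ih' (by omega) 1 Fin.strictMono_succ Fin.strictMono_succ fun i => by simp)
  have hcond := signedDet_condensation M hstair hlast hC.ne'
  exact pos_of_mul_pos_left
    (hcond ▸ add_pos_of_nonneg_of_pos (mul_nonneg hX hY.le) (mul_pos hZ hW)) hC.le

end YoungDiagram

/-- Sign of the determinant of a `k`-positive matrix restricted to a Young
diagram `λ ⊆ n^n` with Durfee square of size `k`: `(-1)^{|μ|} det(M|_λ) ≥ 0`,
with equality only if `λ` does not contain the staircase `(n, n-1, ..., 1)`. -/
theorem det_restrict_youngDiagram_sign {n k : ℕ} (lam : Fin n → ℕ)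
    (hanti : Antitone lam) (hle : ∀ i, lam i ≤ n)
    (hDurfee : IsGreatest {m | m ≤ n ∧ ∀ i : Fin n, (i : ℕ) < m → m ≤ lam i} k)
    (M : Matrix (Fin n) (Fin n) ℝ) (hM : kPos k M) :
    0 ≤ (-1 : ℝ) ^ (n * n - ∑ i, lam i) *
        (restrict M {p : Fin n × Fin n | (p.2 : ℕ) < lam p.1}).det ∧
      ((-1 : ℝ) ^ (n * n - ∑ i, lam i) *
          (restrict M {p : Fin n × Fin n | (p.2 : ℕ) < lam p.1}).det = 0 →
        ¬ ∀ i : Fin n, n - (i : ℕ) ≤ lam i) := by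
  have hpos : ContainsStaircase lam → 0 < signedDet M lam := fun hstair =>
    signedDet_pos hanti hstair hDurfee.2 hM
  rw [← coSize_eq_mul_sub_sum hle]
  exact ⟨signedDet_nonneg hanti hpos, fun hzero hstair => (hpos hstair).ne' hzero⟩
end

section
/- Let μ ⊆ (n,...,n) be a Young diagram, λ = n^n/μ the complementary skew region (boxes (i,j) with j > μ_i), and suppose the largest square contained in λ has size k. If M is an n×n k-positive matrix, then (−1)^{|μ|} det(M|_λ) ≥ 0, with equality if and only if μ ⊄ (n−1, n−2, ..., 1, 0). -/
open Equiv Finset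
open scoped Classical

/-- `Q` contains an `m × m` square region. -/
def hasSquare {n : ℕ} (Q : Set (Fin n × Fin n)) (m : ℕ) : Prop :=
  ∃ r c : ℕ, r + m ≤ n ∧ c + m ≤ n ∧
    ∀ i j : Fin n, r ≤ (i : ℕ) → (i : ℕ) < r + m → c ≤ (j : ℕ) → (j : ℕ) < c + m →
      (i, j) ∈ Q

/-- the complement-of-Young-diagram shape -/
def shp {n : ℕ} (mu : Fin n → ℕ) : Set (Fin n × Fin n) :=
  {p : Fin n × Fin n | mu p.1 ≤ (p.2 : ℕ)}

lemma restrict_apply {n : ℕ} (M : Matrix (Fin n) (Fin n) ℝ) (mu : Fin n → ℕ)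
    (i j : Fin n) : restrict M (shp mu) i j = if mu i ≤ (j : ℕ) then M i j else 0 := by
  unfold _root_.restrict
  split_ifs with h1 h2 h2 <;> first | rfl | (exfalso; exact h2 h1) | (exfalso; exact h1 h2)

lemma kPos_submatrix {n n' k : ℕ} (M : Matrix (Fin n) (Fin n) ℝ) (hM : kPos k M)
    (f g : Fin n' → Fin n) (hf : StrictMono f) (hg : StrictMono g) :
    kPos k (M.submatrix f g) := by
  intro m h1 h2 f' g' hf' hg'
  rw [Matrix.submatrix_submatrix]
  exact hM m h1 h2 _ _ (hf.comp hf') (hg.comp hg')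

/-- If some row forces too many zeros, the restricted determinant vanishes. -/
lemma det_restrict_eq_zero {n : ℕ} (mu : Fin n → ℕ) (hanti : Antitone mu)
    (M : Matrix (Fin n) (Fin n) ℝ) (i0 : Fin n) (h : n ≤ mu i0 + (i0 : ℕ)) :
    (restrict M (shp mu)).det = 0 := by
  rw [Matrix.det_apply]
  apply Finset.sum_eq_zero
  intro σ _
  have hex : ∃ j : Fin n, (j : ℕ) < n - (i0 : ℕ) ∧ σ j ≤ i0 := by
    by_contra hcon
    push_neg at hcon
    set F : ℕ → ℕ := fun x => if h : x < n then ((σ ⟨x, h⟩ : Fin n) : ℕ) else 0 with hF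
    have hmaps : ∀ x ∈ Finset.range (n - (i0 : ℕ)), F x ∈ Finset.Ico ((i0 : ℕ) + 1) n := by
      intro x hx
      simp only [Finset.mem_range] at hx
      have hxn : x < n := by have := i0.isLt; omega
      have h2 := hcon ⟨x, hxn⟩ (by simpa using hx)
      simp only [hF, dif_pos hxn, Finset.mem_Ico]
      exact ⟨by exact_mod_cast h2, (σ _).isLt⟩
    have hinj : Set.InjOn F (Finset.range (n - (i0 : ℕ))) := by
      intro x hx y hy hxy
      simp only [Finset.coe_range, Set.mem_Iio] at hx hy
      have hxn : x < n := by have := i0.isLt; omega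
      have hyn : y < n := by have := i0.isLt; omega
      simp only [hF, dif_pos hxn, dif_pos hyn] at hxy
      have := σ.injective (Fin.ext hxy : σ _ = σ _)
      simpa using congrArg Fin.val this
    have hcard := Finset.card_le_card_of_injOn F hmaps hinj
    simp only [Finset.card_range, Nat.card_Ico] at hcard
    have := i0.isLt
    omega
  obtain ⟨j, hj1, hj2⟩ := hex
  have hzero : restrict M (shp mu) (σ j) j = 0 := by
    rw [restrict_apply, if_neg]
    have h1 : mu i0 ≤ mu (σ j) := hanti hj2
    have := i0.isLt
    omega
  have hprod : (∏ i : Fin n, restrict M (shp mu) (σ i) i) = 0 :=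
    Finset.prod_eq_zero (Finset.mem_univ j) hzero
  rw [hprod, smul_zero]

lemma hasSquare_transfer {n n' : ℕ} {Q : Set (Fin n × Fin n)} {Q' : Set (Fin n' × Fin n')}
    (dr dc : ℕ) (hr : n' + dr ≤ n) (hc : n' + dc ≤ n)
    (h : ∀ (i' j' : Fin n') (i j : Fin n), (i', j') ∈ Q' → (i : ℕ) = (i' : ℕ) + dr →
      (j : ℕ) = (j' : ℕ) + dc → (i, j) ∈ Q)
    {m : ℕ} (hm : hasSquare Q' m) : hasSquare Q m := by
  obtain ⟨r, c, h1, h2, h3⟩ := hm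
  refine ⟨r + dr, c + dc, by omega, by omega, fun i j hi1 hi2 hj1 hj2 => ?_⟩
  have hi : (i : ℕ) - dr < n' := by omega
  have hj : (j : ℕ) - dc < n' := by omega
  refine h ⟨(i : ℕ) - dr, hi⟩ ⟨(j : ℕ) - dc, hj⟩ i j
    (h3 _ _ (by simp; omega) (by simp; omega) (by simp; omega) (by simp; omega))
    (by simp; omega) (by simp; omega)

/-- Determinant of the identity matrix with columns `0` and `last` replaced by `a`, `b`. -/
lemma det_two_col {m : ℕ} (a b : Fin (m + 2) → ℝ) :
    (Matrix.det (Matrix.of fun i j => if j = 0 then a i else if j = Fin.last (m + 1) then b i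
      else (1 : Matrix (Fin (m + 2)) (Fin (m + 2)) ℝ) i j))
      = a 0 * b (Fin.last (m + 1)) - a (Fin.last (m + 1)) * b 0 := by
  have hne : (0 : Fin (m + 2)) ≠ Fin.last (m + 1) := by
    simp [Fin.ext_iff]
  set P : Matrix (Fin (m + 2)) (Fin (m + 2)) ℝ := Matrix.of fun i j =>
    if j = 0 then a i else if j = Fin.last (m + 1) then b i
      else (1 : Matrix (Fin (m + 2)) (Fin (m + 2)) ℝ) i j with hP
  have key : ∀ σ : Equiv.Perm (Fin (m + 2)),
      (∀ j, j ≠ 0 → j ≠ Fin.last (m + 1) → σ j = j) →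
      σ = 1 ∨ σ = Equiv.swap 0 (Fin.last (m + 1)) := by
    intro σ hmid
    by_cases h0 : σ 0 = 0
    · left
      have hlast : σ (Fin.last (m + 1)) = Fin.last (m + 1) := by
        by_contra hy
        have hy0 : σ (Fin.last (m + 1)) ≠ 0 := fun hc =>
          hne.symm (σ.injective (hc.trans h0.symm))
        exact hy (σ.injective (hmid _ hy0 hy))
      ext j
      by_cases hj0 : j = 0
      · simp [hj0, h0]
      · by_cases hjl : j = Fin.last (m + 1)
        · simp [hjl, hlast]
        · simp [hmid j hj0 hjl]
    · right
      have h0l : σ 0 = Fin.last (m + 1) := by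
        by_contra hy
        exact h0 (σ.injective (hmid _ h0 hy))
      have hl0 : σ (Fin.last (m + 1)) = 0 := by
        have hyl : σ (Fin.last (m + 1)) ≠ Fin.last (m + 1) := fun hc =>
          hne (σ.injective (h0l.trans hc.symm))
        by_contra hy
        exact hyl (σ.injective (hmid _ hy hyl))
      ext j
      by_cases hj0 : j = 0
      · simp [hj0, h0l, Equiv.swap_apply_left]
      · by_cases hjl : j = Fin.last (m + 1)
        · simp [hjl, hl0, Equiv.swap_apply_right]
        · rw [hmid j hj0 hjl, Equiv.swap_apply_of_ne_of_ne hj0 hjl]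
  have hfix1 : ∀ j : Fin (m + 2), j ≠ 0 → j ≠ Fin.last (m + 1) → (1 : Equiv.Perm (Fin (m+2))) j = j :=
    fun j _ _ => rfl
  have hfixs : ∀ j : Fin (m + 2), j ≠ 0 → j ≠ Fin.last (m + 1) →
      (Equiv.swap 0 (Fin.last (m + 1))) j = j :=
    fun j hj0 hjl => Equiv.swap_apply_of_ne_of_ne hj0 hjl
  rw [Matrix.det_apply]
  rw [← Finset.sum_filter_add_sum_filter_not Finset.univ
    (fun σ : Equiv.Perm (Fin (m + 2)) => ∀ j, j ≠ 0 → j ≠ Fin.last (m + 1) → σ j = j)]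
  have h2 : (∑ σ ∈ Finset.univ.filter (fun σ : Equiv.Perm (Fin (m + 2)) =>
      ¬ ∀ j, j ≠ 0 → j ≠ Fin.last (m + 1) → σ j = j),
        Equiv.Perm.sign σ • ∏ i, P (σ i) i) = 0 := by
    apply Finset.sum_eq_zero
    intro σ hσ
    simp only [Finset.mem_filter] at hσ
    push_neg at hσ
    obtain ⟨j, hj0, hjl, hjne⟩ := hσ.2
    have hzero : P (σ j) j = 0 := by
      simp only [hP, Matrix.of_apply, if_neg hj0, if_neg hjl]
      exact Matrix.one_apply_ne hjne
    rw [Finset.prod_eq_zero (f := fun i => P (σ i) i) (Finset.mem_univ j) hzero, smul_zero]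
  rw [h2, add_zero]
  have h1 : Finset.univ.filter (fun σ : Equiv.Perm (Fin (m + 2)) =>
      ∀ j, j ≠ 0 → j ≠ Fin.last (m + 1) → σ j = j)
      = {1, Equiv.swap 0 (Fin.last (m + 1))} := by
    ext σ
    simp only [Finset.mem_filter, Finset.mem_univ, true_and, Finset.mem_insert,
      Finset.mem_singleton]
    constructor
    · exact key σ
    · rintro (rfl | rfl)
      exacts [hfix1, hfixs]
  rw [h1]
  have hone_ne : (1 : Equiv.Perm (Fin (m + 2))) ≠ Equiv.swap 0 (Fin.last (m + 1)) := by
    intro hc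
    have h0 : (1 : Equiv.Perm (Fin (m + 2))) 0 = Fin.last (m + 1) := by
      rw [hc]; exact Equiv.swap_apply_left _ _
    exact hne h0
  rw [Finset.sum_pair hone_ne]
  have hprod_off : ∀ σ : Equiv.Perm (Fin (m + 2)),
      (∀ j, j ≠ 0 → j ≠ Fin.last (m + 1) → σ j = j) →
      (∏ i, P (σ i) i) = P (σ 0) 0 * P (σ (Fin.last (m + 1))) (Fin.last (m + 1)) := by
    intro σ hfix
    have hsub : ({0, Fin.last (m + 1)} : Finset (Fin (m + 2))) ⊆ Finset.univ :=
      Finset.subset_univ _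
    have := Finset.prod_subset hsub (f := fun i => P (σ i) i) ?_
    · rw [← this, Finset.prod_pair hne]
    · intro x _ hx
      simp only [Finset.mem_insert, Finset.mem_singleton] at hx
      push_neg at hx
      show P (σ x) x = 1
      rw [hfix x hx.1 hx.2]
      simp only [hP, Matrix.of_apply, if_neg hx.1, if_neg hx.2]
      exact Matrix.one_apply_eq x
  rw [hprod_off 1 hfix1, hprod_off _ hfixs]
  simp only [Equiv.Perm.one_apply, Equiv.swap_apply_left, Equiv.swap_apply_right]
  have e1 : P 0 0 = a 0 := by simp [hP]
  have e2 : P (Fin.last (m + 1)) (Fin.last (m + 1)) = b (Fin.last (m + 1)) := by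
    simp [hP, hne.symm]
  have e3 : P (Fin.last (m + 1)) 0 = a (Fin.last (m + 1)) := by simp [hP]
  have e4 : P 0 (Fin.last (m + 1)) = b 0 := by simp [hP, hne.symm]
  rw [e1, e2, e3, e4, Equiv.Perm.sign_one, Equiv.Perm.sign_swap hne]
  simp [sub_eq_add_neg]

/-- Determinant of a matrix whose first column is `α·e₀` and last column is `β·e_last`. -/
lemma det_corner_pinned {m : ℕ} (Y : Matrix (Fin (m + 2)) (Fin (m + 2)) ℝ) (α β : ℝ)
    (h0 : ∀ i, Y i 0 = if i = 0 then α else 0)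
    (hl : ∀ i, Y i (Fin.last (m + 1)) = if i = Fin.last (m + 1) then β else 0) :
    Y.det = α * β *
      (Y.submatrix (fun i : Fin m => i.succ.castSucc) (fun j : Fin m => j.succ.castSucc)).det := by
  rw [Matrix.det_succ_column_zero]
  rw [Finset.sum_eq_single 0]
  · have hY00 : Y 0 0 = α := by rw [h0]; simp
    rw [hY00]
    simp only [Fin.val_zero, pow_zero, one_mul, Fin.succAbove_zero]
    set Y1 := Y.submatrix Fin.succ Fin.succ with hY1
    have hY1det : Y1.det = β * (Y.submatrix (fun i : Fin m => i.succ.castSucc)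
        (fun j : Fin m => j.succ.castSucc)).det := by
      rw [Matrix.det_succ_column Y1 (Fin.last m)]
      rw [Finset.sum_eq_single (Fin.last m)]
      · have hentry : Y1 (Fin.last m) (Fin.last m) = β := by
          simp only [hY1, Matrix.submatrix_apply, Fin.succ_last]
          rw [hl]; simp
        rw [hentry]
        have hsign : ((-1 : ℝ)) ^ ((Fin.last m : ℕ) + (Fin.last m : ℕ)) = 1 :=
          Even.neg_one_pow ⟨(Fin.last m : ℕ), rfl⟩
        rw [hsign, one_mul]
        congr 1
        rw [Fin.succAbove_last, Matrix.submatrix_submatrix]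
        congr 1 <;> funext x <;> simp [Function.comp, Fin.succ_castSucc]
      · intro i _ hine
        have hzero : Y1 i (Fin.last m) = 0 := by
          simp only [hY1, Matrix.submatrix_apply, Fin.succ_last]
          rw [hl, if_neg]
          intro hc
          exact hine (by
            have := congrArg Fin.val hc
            simp only [Fin.val_succ, Fin.val_last] at this
            exact Fin.ext (by simp only [Fin.val_last]; omega))
        rw [hzero]
        ring
      · intro h; exact absurd (Finset.mem_univ _) h
    rw [hY1det]
    ring
  · intro i _ hine
    have hzero : Y i 0 = 0 := by rw [h0, if_neg hine]
    rw [hzero]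
    ring
  · intro h; exact absurd (Finset.mem_univ _) h

section DJ

variable {m : ℕ} (X : Matrix (Fin (m + 2)) (Fin (m + 2)) ℝ)

private noncomputable def Pmat : Matrix (Fin (m + 2)) (Fin (m + 2)) ℝ :=
  Matrix.of fun i j => if j = 0 then X.adjugate i 0
    else if j = Fin.last (m + 1) then X.adjugate i (Fin.last (m + 1))
    else (1 : Matrix (Fin (m + 2)) (Fin (m + 2)) ℝ) i j

lemma ne_last_0 : (0 : Fin (m + 2)) ≠ Fin.last (m + 1) := by simp [Fin.ext_iff]

lemma adj_corner_00 : X.adjugate 0 0 = (X.submatrix Fin.succ Fin.succ).det := by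
  rw [Matrix.adjugate_fin_succ_eq_det_submatrix]
  simp [Fin.succAbove_zero]

lemma adj_corner_ll : X.adjugate (Fin.last (m + 1)) (Fin.last (m + 1))
    = (X.submatrix Fin.castSucc Fin.castSucc).det := by
  rw [Matrix.adjugate_fin_succ_eq_det_submatrix]
  have h : ((Fin.last (m+1) : Fin (m+2)) : ℕ) + ((Fin.last (m+1) : Fin (m+2)) : ℕ) = 2 * (m + 1) := by
    simp [Fin.val_last]; ring
  rw [h, Fin.succAbove_last]
  simp [pow_mul]

lemma adj_corner_l0 : X.adjugate (Fin.last (m + 1)) 0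
    = (-1 : ℝ) ^ (m + 1) * (X.submatrix Fin.succ Fin.castSucc).det := by
  rw [Matrix.adjugate_fin_succ_eq_det_submatrix]
  simp [Fin.succAbove_zero, Fin.succAbove_last, Fin.val_last]

lemma adj_corner_0l : X.adjugate 0 (Fin.last (m + 1))
    = (-1 : ℝ) ^ (m + 1) * (X.submatrix Fin.castSucc Fin.succ).det := by
  rw [Matrix.adjugate_fin_succ_eq_det_submatrix]
  simp [Fin.succAbove_zero, Fin.succAbove_last, Fin.val_last]

lemma neg_one_sq_pow (e : ℕ) : ((-1 : ℝ) ^ e) * ((-1 : ℝ) ^ e) = 1 := by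
  rw [← pow_add]
  exact Even.neg_one_pow ⟨e, rfl⟩

lemma det_Pmat : (Pmat X).det =
    (X.submatrix Fin.castSucc Fin.castSucc).det * (X.submatrix Fin.succ Fin.succ).det
      - (X.submatrix Fin.castSucc Fin.succ).det * (X.submatrix Fin.succ Fin.castSucc).det := by
  have h := det_two_col (fun i => X.adjugate i 0) (fun i => X.adjugate i (Fin.last (m + 1)))
  rw [show Pmat X = Matrix.of fun i j => if j = 0 then X.adjugate i 0
    else if j = Fin.last (m + 1) then X.adjugate i (Fin.last (m + 1))
    else (1 : Matrix (Fin (m + 2)) (Fin (m + 2)) ℝ) i j from rfl, h,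
    adj_corner_00, adj_corner_ll, adj_corner_l0, adj_corner_0l]
  linear_combination (-((X.submatrix Fin.succ Fin.castSucc).det *
    (X.submatrix Fin.castSucc Fin.succ).det)) * neg_one_sq_pow (m + 1)

lemma mul_Pmat_col0 (i : Fin (m + 2)) :
    (X * Pmat X) i 0 = if i = 0 then X.det else 0 := by
  have h1 : (X * Pmat X) i 0 = (X * X.adjugate) i 0 := by
    simp only [Matrix.mul_apply]
    apply Finset.sum_congr rfl
    intro k _
    have h2 : Pmat X k 0 = X.adjugate k 0 := by simp [Pmat]
    rw [h2]
  rw [h1, Matrix.mul_adjugate]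
  by_cases h : i = 0 <;> simp [h, Matrix.one_apply, Matrix.smul_apply, (ne_last_0 (m := m))]

lemma mul_Pmat_coll (i : Fin (m + 2)) :
    (X * Pmat X) i (Fin.last (m + 1)) = if i = Fin.last (m + 1) then X.det else 0 := by
  have h1 : (X * Pmat X) i (Fin.last (m + 1)) = (X * X.adjugate) i (Fin.last (m + 1)) := by
    simp only [Matrix.mul_apply]
    apply Finset.sum_congr rfl
    intro k _
    have h2 : Pmat X k (Fin.last (m + 1)) = X.adjugate k (Fin.last (m + 1)) := by
      simp [Pmat, (ne_last_0 (m := m)).symm]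
    rw [h2]
  rw [h1, Matrix.mul_adjugate]
  by_cases h : i = Fin.last (m + 1) <;> simp [h, Matrix.one_apply, Matrix.smul_apply]

lemma mul_Pmat_mid (i : Fin (m + 2)) (j : Fin (m + 2)) (hj0 : j ≠ 0)
    (hjl : j ≠ Fin.last (m + 1)) : (X * Pmat X) i j = X i j := by
  have h1 : (X * Pmat X) i j = (X * (1 : Matrix (Fin (m + 2)) (Fin (m + 2)) ℝ)) i j := by
    simp only [Matrix.mul_apply]
    apply Finset.sum_congr rfl
    intro k _
    have h2 : Pmat X k j = (1 : Matrix (Fin (m + 2)) (Fin (m + 2)) ℝ) k j := by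
      simp [Pmat, hj0, hjl]
    rw [h2]
  rw [h1, Matrix.mul_one]

/-- The key determinant identity (Desnanot–Jacobi up to the degenerate case). -/
lemma star_identity :
    X.det * ((X.submatrix Fin.castSucc Fin.castSucc).det * (X.submatrix Fin.succ Fin.succ).det
      - (X.submatrix Fin.castSucc Fin.succ).det * (X.submatrix Fin.succ Fin.castSucc).det)
    = X.det ^ 2 * (X.submatrix (fun i : Fin m => i.succ.castSucc)
        (fun j : Fin m => j.succ.castSucc)).det := by
  have h1 : X.det * (Pmat X).det = (X * Pmat X).det := (Matrix.det_mul _ _).symm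
  have h2 := det_corner_pinned (X * Pmat X) X.det X.det (mul_Pmat_col0 X) (mul_Pmat_coll X)
  have h3 : (X * Pmat X).submatrix (fun i : Fin m => i.succ.castSucc)
      (fun j : Fin m => j.succ.castSucc) = X.submatrix (fun i : Fin m => i.succ.castSucc)
      (fun j : Fin m => j.succ.castSucc) := by
    ext i j
    simp only [Matrix.submatrix_apply]
    apply mul_Pmat_mid
    · intro hc
      have := congrArg Fin.val hc
      simp only [Fin.coe_castSucc, Fin.val_succ, Fin.val_zero] at this
      omega
    · intro hc
      have := congrArg Fin.val hc
      simp only [Fin.coe_castSucc, Fin.val_succ, Fin.val_last] at this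
      have := j.isLt
      omega
  rw [← det_Pmat, h1, h2, h3]
  ring

/-- If the `LR` minor and the corner 2×2 combination are nonzero, `det X ≠ 0`. -/
lemma detX_ne_zero (hLR : (X.submatrix Fin.succ Fin.succ).det ≠ 0)
    (hP : (X.submatrix Fin.castSucc Fin.castSucc).det * (X.submatrix Fin.succ Fin.succ).det
      - (X.submatrix Fin.castSucc Fin.succ).det * (X.submatrix Fin.succ Fin.castSucc).det ≠ 0) :
    X.det ≠ 0 := by
  intro h0
  set a : Fin (m + 2) → ℝ := fun i => X.adjugate i 0 with ha
  set b : Fin (m + 2) → ℝ := fun i => X.adjugate i (Fin.last (m + 1)) with hb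
  have hXa : X.mulVec a = 0 := by
    funext i
    have h1 : X.mulVec a i = (X * X.adjugate) i 0 := by
      simp [Matrix.mulVec, Matrix.mul_apply, ha, dotProduct]
    rw [h1, Matrix.mul_adjugate, h0]
    simp
  have hXb : X.mulVec b = 0 := by
    funext i
    have h1 : X.mulVec b i = (X * X.adjugate) i (Fin.last (m + 1)) := by
      simp [Matrix.mulVec, Matrix.mul_apply, hb, dotProduct]
    rw [h1, Matrix.mul_adjugate, h0]
    simp
  set c : Fin (m + 2) → ℝ := fun i => b 0 * a i - a 0 * b i with hc
  have hc0 : c 0 = 0 := by simp [hc]; ring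
  have hclast : c (Fin.last (m + 1)) ≠ 0 := by
    have e1 : a 0 = (X.submatrix Fin.succ Fin.succ).det := adj_corner_00 X
    have e2 : b (Fin.last (m + 1)) = (X.submatrix Fin.castSucc Fin.castSucc).det :=
      adj_corner_ll X
    have e3 : a (Fin.last (m + 1)) = (-1 : ℝ) ^ (m + 1) * (X.submatrix Fin.succ Fin.castSucc).det :=
      adj_corner_l0 X
    have e4 : b 0 = (-1 : ℝ) ^ (m + 1) * (X.submatrix Fin.castSucc Fin.succ).det :=
      adj_corner_0l X
    simp only [hc, e1, e2, e3, e4]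
    intro hzero
    apply hP
    linear_combination (-1 : ℝ) * hzero + ((X.submatrix Fin.castSucc Fin.succ).det *
      (X.submatrix Fin.succ Fin.castSucc).det) * neg_one_sq_pow (m + 1)
  have hXc : X.mulVec c = 0 := by
    funext i
    have h1 : X.mulVec c i = b 0 * X.mulVec a i - a 0 * X.mulVec b i := by
      simp only [Matrix.mulVec, dotProduct, hc, Finset.mul_sum, ← Finset.sum_sub_distrib]
      apply Finset.sum_congr rfl
      intro k _
      ring
    rw [h1, hXa, hXb]
    simp
  have hLRc : (X.submatrix Fin.succ Fin.succ).mulVec (fun i => c i.succ) = 0 := by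
    funext i
    have hrow := congrFun hXc i.succ
    simp only [Matrix.mulVec, dotProduct, Matrix.submatrix_apply, Pi.zero_apply] at hrow ⊢
    rw [Fin.sum_univ_succ, hc0, mul_zero, zero_add] at hrow
    exact hrow
  have hz := Matrix.eq_zero_of_mulVec_eq_zero hLR hLRc
  have hcl : c ((Fin.last m).succ) = 0 := by
    have h := congrFun hz (Fin.last m)
    simpa using h
  rw [Fin.succ_last] at hcl
  exact hclast hcl

end DJ

/-- Pure sign/algebra bookkeeping for the inductive step. -/
lemma final_algebra (S SUL SLL SUR SLR SC : ℕ) (dUL dLR dUR dLL dC dX : ℝ)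
    (h1 : S = SUL) (h2 : S + SLR = SUR + SLL + 1) (h3 : SC = SLR)
    (hA : 0 ≤ (-1 : ℝ) ^ SUL * dUL) (hB : 0 < (-1 : ℝ) ^ SLR * dLR)
    (hC : 0 < (-1 : ℝ) ^ SUR * dUR) (hD : 0 < (-1 : ℝ) ^ SLL * dLL)
    (hE : 0 < (-1 : ℝ) ^ SC * dC)
    (hstar : dX * (dUL * dLR - dUR * dLL) = dX ^ 2 * dC)
    (hne : dLR ≠ 0 → dUL * dLR - dUR * dLL ≠ 0 → dX ≠ 0) :
    0 < (-1 : ℝ) ^ S * dX := by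
  have e1 : (-1 : ℝ) ^ (S + SLR) = (-1 : ℝ) ^ SUL * (-1 : ℝ) ^ SLR := by
    rw [h1, pow_add]
  have e2 : (-1 : ℝ) ^ (S + SLR) = -((-1 : ℝ) ^ SUR * (-1 : ℝ) ^ SLL) := by
    rw [h2, pow_succ, ← pow_add]
    ring
  have hP' : (-1 : ℝ) ^ (S + SLR) * (dUL * dLR - dUR * dLL)
      = ((-1 : ℝ) ^ SUL * dUL) * ((-1 : ℝ) ^ SLR * dLR)
        + ((-1 : ℝ) ^ SUR * dUR) * ((-1 : ℝ) ^ SLL * dLL) := by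
    linear_combination (dUL * dLR) * e1 - (dUR * dLL) * e2
  have hF : 0 < (-1 : ℝ) ^ (S + SLR) * (dUL * dLR - dUR * dLL) := by
    rw [hP']
    have := mul_nonneg hA (le_of_lt hB)
    nlinarith [mul_pos hC hD]
  have hPne : dUL * dLR - dUR * dLL ≠ 0 := by
    intro hz
    rw [hz, mul_zero] at hF
    exact lt_irrefl 0 hF
  have hLRne : dLR ≠ 0 := by
    intro hz
    rw [hz, mul_zero] at hB
    exact lt_irrefl 0 hB
  have hXne : dX ≠ 0 := hne hLRne hPne
  have hcanc : dUL * dLR - dUR * dLL = dX * dC := by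
    have := hstar
    rw [pow_two] at this
    rw [mul_assoc] at this
    exact mul_left_cancel₀ hXne this
  rw [hcanc] at hF
  have hsplit : (-1 : ℝ) ^ (S + SLR) * (dX * dC)
      = ((-1 : ℝ) ^ S * dX) * ((-1 : ℝ) ^ SLR * dC) := by
    rw [pow_add]; ring
  rw [hsplit] at hF
  have hEC : 0 < (-1 : ℝ) ^ SLR * dC := by rw [← h3]; exact hE
  nlinarith [hF, hEC]

lemma aux_pos : ∀ (n : ℕ), ∀ (mu : Fin n → ℕ), Antitone mu →
    (∀ i : Fin n, mu i ≤ n - 1 - (i : ℕ)) →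
    ∀ (k : ℕ) (M : Matrix (Fin n) (Fin n) ℝ), kPos k M →
    (∀ m', hasSquare (shp mu) m' → m' ≤ k) →
    0 < (-1 : ℝ) ^ (∑ i, mu i) * (restrict M (shp mu)).det := by
  intro n
  induction n using Nat.strong_induction_on with
  | _ n IH =>
  match n, IH with
  | 0, _ =>
    intro mu hanti hfeas k M hM hsq
    simp [Matrix.det_isEmpty]
  | (n' + 1), IH =>
    intro mu hanti hfeas k M hM hsq
    by_cases hmu0 : mu 0 = 0
    · -- the shape is everything : restricted determinant is det M itself
      have hall : ∀ i, mu i = 0 := fun i =>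
        Nat.le_antisymm (hmu0 ▸ hanti (Fin.zero_le i)) (Nat.zero_le _)
      have hres : restrict M (shp mu) = M := by
        funext i j
        rw [restrict_apply, if_pos (by rw [hall i]; exact Nat.zero_le _)]
      have hsum : (∑ i, mu i) = 0 := Finset.sum_eq_zero (fun i _ => hall i)
      rw [hres, hsum, pow_zero, one_mul]
      have hsqfull : hasSquare (shp mu) (n' + 1) :=
        ⟨0, 0, by omega, by omega, fun i j _ _ _ _ => by
          show mu i ≤ (j : ℕ); rw [hall i]; exact Nat.zero_le _⟩
      have hk := hsq _ hsqfull
      have := hM (n' + 1) (by omega) hk id id strictMono_id strictMono_id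
      simpa using this
    · have h1 : 1 ≤ mu 0 := Nat.one_le_iff_ne_zero.mpr hmu0
      have hmu0le := hfeas 0
      simp only [Fin.val_zero, Nat.sub_zero] at hmu0le
      obtain ⟨m, rfl⟩ : ∃ m, n' = m + 1 := by
        cases n' with
        | zero => exfalso; omega
        | succ m => exact ⟨m, rfl⟩
      -- strict monotonicity of the embeddings
      have hstrS : StrictMono (Fin.succ : Fin (m + 1) → Fin (m + 2)) := Fin.strictMono_succ
      have hstrC : StrictMono (Fin.castSucc : Fin (m + 1) → Fin (m + 2)) :=
        Fin.strictMono_castSucc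
      have hstrM : StrictMono (fun i : Fin m => i.succ.castSucc) := by
        intro a b hab
        simp only [Fin.lt_def, Fin.coe_castSucc, Fin.val_succ]
        exact Nat.add_lt_add_right hab 1
      have mulast : mu (Fin.last (m + 1)) = 0 := by
        have := hfeas (Fin.last (m + 1))
        simp only [Fin.val_last] at this
        omega
      -- identification of the submatrices of the restricted matrix
      have hXUL : (restrict M (shp mu)).submatrix Fin.castSucc Fin.castSucc
          = restrict (M.submatrix Fin.castSucc Fin.castSucc)
            (shp (fun i : Fin (m + 1) => mu i.castSucc)) := by
        ext i j
        rw [Matrix.submatrix_apply, restrict_apply, restrict_apply, Matrix.submatrix_apply]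
        exact if_congr (by simp only [Fin.coe_castSucc]) rfl rfl
      have hXLL : (restrict M (shp mu)).submatrix Fin.succ Fin.castSucc
          = restrict (M.submatrix Fin.succ Fin.castSucc)
            (shp (fun i : Fin (m + 1) => mu i.succ)) := by
        ext i j
        rw [Matrix.submatrix_apply, restrict_apply, restrict_apply, Matrix.submatrix_apply]
        exact if_congr (by simp only [Fin.coe_castSucc]) rfl rfl
      have hXUR : (restrict M (shp mu)).submatrix Fin.castSucc Fin.succ
          = restrict (M.submatrix Fin.castSucc Fin.succ)
            (shp (fun i : Fin (m + 1) => mu i.castSucc - 1)) := by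
        ext i j
        rw [Matrix.submatrix_apply, restrict_apply, restrict_apply, Matrix.submatrix_apply]
        exact if_congr (by simp only [Fin.val_succ]; omega) rfl rfl
      have hXLR : (restrict M (shp mu)).submatrix Fin.succ Fin.succ
          = restrict (M.submatrix Fin.succ Fin.succ)
            (shp (fun i : Fin (m + 1) => mu i.succ - 1)) := by
        ext i j
        rw [Matrix.submatrix_apply, restrict_apply, restrict_apply, Matrix.submatrix_apply]
        exact if_congr (by simp only [Fin.val_succ]; omega) rfl rfl
      have hXC : (restrict M (shp mu)).submatrix (fun i : Fin m => i.succ.castSucc)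
            (fun j : Fin m => j.succ.castSucc)
          = restrict (M.submatrix (fun i : Fin m => i.succ.castSucc)
              (fun j : Fin m => j.succ.castSucc))
            (shp (fun i : Fin m => mu i.succ.castSucc - 1)) := by
        ext i j
        rw [Matrix.submatrix_apply, restrict_apply, restrict_apply, Matrix.submatrix_apply]
        exact if_congr (by simp only [Fin.coe_castSucc, Fin.val_succ]; omega) rfl rfl
      -- antitonicity of the sub-shapes
      have hantiUL : Antitone (fun i : Fin (m + 1) => mu i.castSucc) :=
        fun i j hij => hanti (Fin.castSucc_le_castSucc_iff.mpr hij)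
      have hantiLL : Antitone (fun i : Fin (m + 1) => mu i.succ) :=
        fun i j hij => hanti (Fin.succ_le_succ_iff.mpr hij)
      have hantiUR : Antitone (fun i : Fin (m + 1) => mu i.castSucc - 1) :=
        fun i j hij => Nat.sub_le_sub_right (hantiUL hij) 1
      have hantiLR : Antitone (fun i : Fin (m + 1) => mu i.succ - 1) :=
        fun i j hij => Nat.sub_le_sub_right (hantiLL hij) 1
      have hantiC : Antitone (fun i : Fin m => mu i.succ.castSucc - 1) := by
        intro i j hij
        apply Nat.sub_le_sub_right
        apply hanti
        apply Fin.castSucc_le_castSucc_iff.mpr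
        exact Fin.succ_le_succ_iff.mpr hij
      -- square-size bounds for the sub-shapes
      have hsqUL : ∀ m', hasSquare (shp (fun i : Fin (m + 1) => mu i.castSucc)) m' → m' ≤ k := by
        intro m' hm'
        apply hsq m'
        apply hasSquare_transfer 0 0 (by omega) (by omega) ?_ hm'
        intro i' j' i j hmem hi hj
        have hii : i = i'.castSucc := Fin.ext (by simp only [Fin.coe_castSucc]; omega)
        have hmem' : mu i'.castSucc ≤ (j' : ℕ) := hmem
        show mu i ≤ (j : ℕ)
        rw [hii]
        omega
      have hsqLL : ∀ m', hasSquare (shp (fun i : Fin (m + 1) => mu i.succ)) m' → m' ≤ k := by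
        intro m' hm'
        apply hsq m'
        apply hasSquare_transfer 1 0 (by omega) (by omega) ?_ hm'
        intro i' j' i j hmem hi hj
        have hii : i = i'.succ := Fin.ext (by simp only [Fin.val_succ]; omega)
        have hmem' : mu i'.succ ≤ (j' : ℕ) := hmem
        show mu i ≤ (j : ℕ)
        rw [hii]
        omega
      have hsqUR : ∀ m', hasSquare (shp (fun i : Fin (m + 1) => mu i.castSucc - 1)) m' → m' ≤ k := by
        intro m' hm'
        apply hsq m'
        apply hasSquare_transfer 0 1 (by omega) (by omega) ?_ hm'
        intro i' j' i j hmem hi hj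
        have hii : i = i'.castSucc := Fin.ext (by simp only [Fin.coe_castSucc]; omega)
        have hmem' : mu i'.castSucc - 1 ≤ (j' : ℕ) := hmem
        show mu i ≤ (j : ℕ)
        rw [hii]
        omega
      have hsqLR : ∀ m', hasSquare (shp (fun i : Fin (m + 1) => mu i.succ - 1)) m' → m' ≤ k := by
        intro m' hm'
        apply hsq m'
        apply hasSquare_transfer 1 1 (by omega) (by omega) ?_ hm'
        intro i' j' i j hmem hi hj
        have hii : i = i'.succ := Fin.ext (by simp only [Fin.val_succ]; omega)
        have hmem' : mu i'.succ - 1 ≤ (j' : ℕ) := hmem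
        show mu i ≤ (j : ℕ)
        rw [hii]
        omega
      have hsqC : ∀ m', hasSquare (shp (fun i : Fin m => mu i.succ.castSucc - 1)) m' → m' ≤ k := by
        intro m' hm'
        apply hsq m'
        apply hasSquare_transfer 1 1 (by omega) (by omega) ?_ hm'
        intro i' j' i j hmem hi hj
        have hii : i = i'.succ.castSucc := Fin.ext (by
          simp only [Fin.coe_castSucc, Fin.val_succ]; omega)
        have hmem' : mu i'.succ.castSucc - 1 ≤ (j' : ℕ) := hmem
        show mu i ≤ (j : ℕ)
        rw [hii]
        omega
      -- feasibility of the (always feasible) sub-shapes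
      have hfeasLL : ∀ i : Fin (m + 1), mu i.succ ≤ (m + 1) - 1 - (i : ℕ) := by
        intro i
        have := hfeas i.succ
        simp only [Fin.val_succ] at this
        have hi := i.isLt
        omega
      have hfeasUR : ∀ i : Fin (m + 1), mu i.castSucc - 1 ≤ (m + 1) - 1 - (i : ℕ) := by
        intro i
        have := hfeas i.castSucc
        simp only [Fin.coe_castSucc] at this
        have hi := i.isLt
        omega
      have hfeasLR : ∀ i : Fin (m + 1), mu i.succ - 1 ≤ (m + 1) - 1 - (i : ℕ) := by
        intro i
        have := hfeas i.succ
        simp only [Fin.val_succ] at this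
        have hi := i.isLt
        omega
      have hfeasC : ∀ i : Fin m, mu i.succ.castSucc - 1 ≤ m - 1 - (i : ℕ) := by
        intro i
        have := hfeas i.succ.castSucc
        simp only [Fin.coe_castSucc, Fin.val_succ] at this
        have hi := i.isLt
        omega
      -- inductive positivity facts
      have pLL : 0 < (-1 : ℝ) ^ (∑ i : Fin (m + 1), mu i.succ) *
          ((restrict M (shp mu)).submatrix Fin.succ Fin.castSucc).det := by
        rw [hXLL]
        exact IH (m + 1) (by omega) _ hantiLL hfeasLL k _
          (kPos_submatrix M hM _ _ hstrS hstrC) hsqLL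
      have pUR : 0 < (-1 : ℝ) ^ (∑ i : Fin (m + 1), (mu i.castSucc - 1)) *
          ((restrict M (shp mu)).submatrix Fin.castSucc Fin.succ).det := by
        rw [hXUR]
        exact IH (m + 1) (by omega) _ hantiUR hfeasUR k _
          (kPos_submatrix M hM _ _ hstrC hstrS) hsqUR
      have pLR : 0 < (-1 : ℝ) ^ (∑ i : Fin (m + 1), (mu i.succ - 1)) *
          ((restrict M (shp mu)).submatrix Fin.succ Fin.succ).det := by
        rw [hXLR]
        exact IH (m + 1) (by omega) _ hantiLR hfeasLR k _
          (kPos_submatrix M hM _ _ hstrS hstrS) hsqLR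
      have pC : 0 < (-1 : ℝ) ^ (∑ i : Fin m, (mu i.succ.castSucc - 1)) *
          ((restrict M (shp mu)).submatrix (fun i : Fin m => i.succ.castSucc)
            (fun j : Fin m => j.succ.castSucc)).det := by
        rw [hXC]
        exact IH m (by omega) _ hantiC hfeasC k _
          (kPos_submatrix M hM _ _ hstrM hstrM) hsqC
      have pUL : 0 ≤ (-1 : ℝ) ^ (∑ i : Fin (m + 1), mu i.castSucc) *
          ((restrict M (shp mu)).submatrix Fin.castSucc Fin.castSucc).det := by
        rw [hXUL]
        by_cases hULfeas : ∀ i : Fin (m + 1), mu i.castSucc ≤ (m + 1) - 1 - (i : ℕ)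
        · exact le_of_lt (IH (m + 1) (by omega) _ hantiUL hULfeas k _
            (kPos_submatrix M hM _ _ hstrC hstrC) hsqUL)
        · push_neg at hULfeas
          obtain ⟨i0, hi0⟩ := hULfeas
          rw [det_restrict_eq_zero _ hantiUL _ i0 (by have := i0.isLt; omega), mul_zero]
      -- arithmetic identities between the exponents
      have hs1 : (∑ i, mu i) = mu 0 + ∑ i : Fin (m + 1), mu i.succ :=
        Fin.sum_univ_succ mu
      have hs2 : (∑ i, mu i) = (∑ i : Fin (m + 1), mu i.castSucc) + mu (Fin.last (m + 1)) :=
        Fin.sum_univ_castSucc mu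
      have hw1 : (∑ i : Fin (m + 2), (mu i - 1)) = (mu 0 - 1) +
          ∑ i : Fin (m + 1), (mu i.succ - 1) :=
        Fin.sum_univ_succ (fun i => mu i - 1)
      have hw2 : (∑ i : Fin (m + 2), (mu i - 1)) = (∑ i : Fin (m + 1), (mu i.castSucc - 1)) +
          (mu (Fin.last (m + 1)) - 1) :=
        Fin.sum_univ_castSucc (fun i => mu i - 1)
      have hSC : (∑ i : Fin (m + 1), (mu i.succ - 1))
          = (∑ i : Fin m, (mu i.succ.castSucc - 1)) := by
        rw [Fin.sum_univ_castSucc (f := fun i : Fin (m + 1) => mu i.succ - 1)]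
        simp only [Fin.succ_castSucc, Fin.succ_last, mulast, Nat.zero_sub, add_zero]
      -- final assembly
      exact final_algebra (∑ i, mu i) (∑ i : Fin (m + 1), mu i.castSucc)
        (∑ i : Fin (m + 1), mu i.succ) (∑ i : Fin (m + 1), (mu i.castSucc - 1))
        (∑ i : Fin (m + 1), (mu i.succ - 1)) (∑ i : Fin m, (mu i.succ.castSucc - 1))
        _ _ _ _ _ _
        (by omega) (by omega) hSC.symm
        pUL pLR pUR pLL pC
        (star_identity (restrict M (shp mu)))
        (detX_ne_zero (restrict M (shp mu)))

/-- Sign of the determinant of a `k`-positive matrix restricted to the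
complement `λ = n^n/μ` of a Young diagram, where the largest square in `λ`
has size `k`: `(-1)^{|μ|} det(M|_λ) ≥ 0`, with equality iff
`μ ⊄ (n-1, n-2, ..., 1, 0)`. -/
theorem det_restrict_complementYoung_sign {n k : ℕ} (mu : Fin n → ℕ)
    (hanti : Antitone mu) (hle : ∀ i, mu i ≤ n)
    (hsq : IsGreatest
      {m | hasSquare {p : Fin n × Fin n | mu p.1 ≤ (p.2 : ℕ)} m} k)
    (M : Matrix (Fin n) (Fin n) ℝ) (hM : kPos k M) :
    0 ≤ (-1 : ℝ) ^ (∑ i, mu i) *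
        (restrict M {p : Fin n × Fin n | mu p.1 ≤ (p.2 : ℕ)}).det ∧
      ((-1 : ℝ) ^ (∑ i, mu i) *
          (restrict M {p : Fin n × Fin n | mu p.1 ≤ (p.2 : ℕ)}).det = 0 ↔
        ¬ ∀ i : Fin n, mu i ≤ n - 1 - (i : ℕ)) := by
  have hshp : {p : Fin n × Fin n | mu p.1 ≤ (p.2 : ℕ)} = shp mu := rfl
  rw [hshp]
  by_cases hfeas : ∀ i : Fin n, mu i ≤ n - 1 - (i : ℕ)
  · have hpos := aux_pos n mu hanti hfeas k M hM (fun m' hm' => hsq.2 hm')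
    refine ⟨le_of_lt hpos, ?_, fun hcon => absurd hfeas hcon⟩
    intro h0
    rw [h0] at hpos
    exact absurd hpos (lt_irrefl 0)
  · have hfeas' := hfeas
    push_neg at hfeas'
    obtain ⟨i0, hi0⟩ := hfeas'
    have hz : (restrict M (shp mu)).det = 0 :=
      det_restrict_eq_zero mu hanti M i0 (by have := i0.isLt; omega)
    rw [hz, mul_zero]
    exact ⟨le_refl 0, fun _ => hfeas, fun _ => rfl⟩
end
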